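/- arXiv:2603.07842 — 7 statements merged into one kernel-verified Lean document; each statement's English description precedes it below -/
import Mathlib

section
/- Let X₁, X₂, ... be i.i.d. real random variables, and let s, t be positive integers with the sample mean of size s stochastically dominating the sample mean of size t (i.e., X̄_s ≥_st X̄_t). Then for every positive integer k, X̄_{ks} ≥_st X̄_{kt}, where X̄_m denotes the average of m i.i.d. copies of X. -/
/-!
Let `ν` be the common law of the `Xᵢ`. By independence the law of `X₀ + ⋯ + X_{n-1}` is the
convolution power `ν^{∗n}`, and `ν^{∗ks} = (ν^{∗s})^{∗k}`; since rescaling commutes with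
convolution, the law of `X̄_{ks}` is the `k`-th convolution power of the law of `X̄_s`, rescaled
by `1/k`, and likewise for `t`. Stochastic dominance is preserved by convolution, because
`(α ∗ γ)(-∞, x] = ∫ γ(-∞, x - u] dα(u)` is monotone in `γ` and `α ∗ γ = γ ∗ α`, and by
rescaling with a positive factor.
-/

open MeasureTheory ProbabilityTheory Set

namespace MeasureTheory.Measure

section ConvPow

variable {M : Type*} [AddMonoid M] [MeasurableSpace M]

noncomputable def convPow (ν : Measure M) : ℕ → Measure M
  | 0 => dirac 0
  | n + 1 => convPow ν n ∗ ν

@[simp] lemma convPow_zero (ν : Measure M) : ν.convPow 0 = dirac 0 := rfl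

lemma convPow_succ (ν : Measure M) (n : ℕ) : ν.convPow (n + 1) = ν.convPow n ∗ ν := rfl

instance sFinite_convPow (ν : Measure M) [SFinite ν] (n : ℕ) : SFinite (ν.convPow n) := by
  induction n with
  | zero => rw [convPow_zero]; infer_instance
  | succ n ih => rw [convPow_succ]; infer_instance

variable [MeasurableAdd₂ M]

lemma convPow_add (ν : Measure M) [SFinite ν] (m n : ℕ) :
    ν.convPow (m + n) = ν.convPow m ∗ ν.convPow n := by
  induction n with
  | zero => simp [conv_dirac_zero]
  | succ n ih => rw [← add_assoc, convPow_succ, convPow_succ, ih, conv_assoc]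

lemma convPow_mul (ν : Measure M) [SFinite ν] (k n : ℕ) :
    ν.convPow (k * n) = (ν.convPow n).convPow k := by
  induction k with
  | zero => simp
  | succ k ih => rw [Nat.succ_mul, convPow_add, ih, convPow_succ]

lemma map_convPow {M' : Type*} [AddMonoid M'] [MeasurableSpace M'] [MeasurableAdd₂ M']
    (ν : Measure M) [SFinite ν] (L : M →+ M') (hL : Measurable L) (n : ℕ) :
    (ν.convPow n).map L = (ν.map L).convPow n := by
  induction n with
  | zero => simp [map_dirac' hL]
  | succ n ih => rw [convPow_succ, convPow_succ, map_conv_addMonoidHom L hL, ih]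

end ConvPow

lemma map_div_convPow (ν : Measure ℝ) [SFinite ν] (c : ℝ) (n : ℕ) :
    (ν.convPow n).map (· / c) = (ν.map (· / c)).convPow n := by
  simpa only [AddMonoidHom.coe_mulRight, div_eq_mul_inv] using
    map_convPow ν (AddMonoidHom.mulRight c⁻¹) (measurable_mul_const _) n

lemma map_div_convPow_mul (ν : Measure ℝ) [SFinite ν] (k n : ℕ) :
    (ν.convPow (k * n)).map (· / ((k * n : ℕ) : ℝ))
      = (((ν.convPow n).map (· / (n : ℝ))).convPow k).map (· / (k : ℝ)) := by
  rw [← map_div_convPow, ← convPow_mul, map_map (measurable_div_const _) (measurable_div_const _)]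
  congr 1
  funext y
  simp [div_div, mul_comm]

lemma conv_apply_Iic (α β : Measure ℝ) [SFinite β] (x : ℝ) :
    (α ∗ β) (Iic x) = ∫⁻ u, β (Iic (x - u)) ∂α := by
  rw [conv, map_apply measurable_add measurableSet_Iic,
    prod_apply (measurable_add measurableSet_Iic)]
  congr! 3 with u
  ext v
  simp [le_sub_iff_add_le']

def StochDominates (α β : Measure ℝ) : Prop :=
  ∀ x, α (Iic x) ≤ β (Iic x)

namespace StochDominates

variable {α β γ δ : Measure ℝ}

lemma refl (α : Measure ℝ) : StochDominates α α := fun _ => le_rfl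

lemma trans (hαβ : StochDominates α β) (hβγ : StochDominates β γ) : StochDominates α γ :=
  fun x => (hαβ x).trans (hβγ x)

lemma conv_right (hγδ : StochDominates γ δ) (α : Measure ℝ) [SFinite γ] [SFinite δ] :
    StochDominates (α ∗ γ) (α ∗ δ) := fun x => by
  rw [conv_apply_Iic, conv_apply_Iic]
  exact lintegral_mono fun u => hγδ _

lemma conv [SFinite α] [SFinite β] [SFinite γ] [SFinite δ]
    (hαβ : StochDominates α β) (hγδ : StochDominates γ δ) :
    StochDominates (α ∗ γ) (β ∗ δ) := by
  have h := hαβ.conv_right δ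
  rw [conv_comm δ α, conv_comm δ β] at h
  exact (hγδ.conv_right α).trans h

lemma convPow [SFinite α] [SFinite β] (h : StochDominates α β) (n : ℕ) :
    StochDominates (α.convPow n) (β.convPow n) := by
  induction n with
  | zero => exact refl _
  | succ n ih => exact ih.conv h

lemma map_div (h : StochDominates α β) {c : ℝ} (hc : 0 < c) :
    StochDominates (α.map (· / c)) (β.map (· / c)) := fun x => by
  have hpre : (· / c) ⁻¹' Iic x = Iic (x * c) := by
    ext y
    simp [div_le_iff₀ hc]
  rw [map_apply (measurable_div_const c) measurableSet_Iic,
    map_apply (measurable_div_const c) measurableSet_Iic, hpre]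
  exact h _

end StochDominates

end MeasureTheory.Measure

open MeasureTheory.Measure

lemma ProbabilityTheory.iIndepFun.map_sum_range_eq_convPow {Ω M : Type*} [MeasurableSpace Ω]
    {μ : Measure Ω} [IsProbabilityMeasure μ] [AddCommMonoid M] [MeasurableSpace M]
    [MeasurableAdd₂ M] {X : ℕ → Ω → M} (hindep : iIndepFun X μ) (hmeas : ∀ i, Measurable (X i))
    (hident : ∀ i, μ.map (X i) = μ.map (X 0)) (n : ℕ) :
    μ.map (fun ω => ∑ i ∈ Finset.range n, X i ω) = (μ.map (X 0)).convPow n := by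
  induction n with
  | zero => simp [Measure.map_const]
  | succ n ih =>
    rw [← Finset.sum_fn, Finset.sum_range_succ,
      (hindep.indepFun_sum_range_succ hmeas n).map_add_eq_map_conv_map (by fun_prop) (hmeas n),
      hident n, convPow_succ, ← ih, Finset.sum_fn]

theorem sampleMean_stochDom_of_blocks_general {Ω : Type*} [MeasurableSpace Ω]
    (μ : Measure Ω) [IsProbabilityMeasure μ]
    (X : ℕ → Ω → ℝ) (hmeas : ∀ i, Measurable (X i))
    (hindep : iIndepFun X μ)
    (hident : ∀ i, μ.map (X i) = μ.map (X 0))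
    (s t : ℕ)
    (hdom : ∀ x : ℝ,
      μ {ω | (∑ i ∈ Finset.range s, X i ω) / (s : ℝ) ≤ x}
        ≤ μ {ω | (∑ i ∈ Finset.range t, X i ω) / (t : ℝ) ≤ x})
    (k : ℕ) (hk : 0 < k) :
    ∀ x : ℝ,
      μ {ω | (∑ i ∈ Finset.range (k * s), X i ω) / ((k * s : ℕ) : ℝ) ≤ x}
        ≤ μ {ω | (∑ i ∈ Finset.range (k * t), X i ω) / ((k * t : ℕ) : ℝ) ≤ x} := by
  set ν := μ.map (X 0)
  have hmean (n : ℕ) (x : ℝ) : μ {ω | (∑ i ∈ Finset.range n, X i ω) / (n : ℝ) ≤ x}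
      = (ν.convPow n).map (· / (n : ℝ)) (Iic x) := by
    rw [← hindep.map_sum_range_eq_convPow hmeas hident,
      map_map (measurable_div_const _) (by fun_prop),
      map_apply (by fun_prop) measurableSet_Iic]
    rfl
  have hdom_law : StochDominates ((ν.convPow s).map (· / (s : ℝ)))
      ((ν.convPow t).map (· / (t : ℝ))) := fun x => by
    rw [← hmean, ← hmean]
    exact hdom x
  intro x
  rw [hmean, hmean, map_div_convPow_mul, map_div_convPow_mul]
  exact (hdom_law.convPow k).map_div (Nat.cast_pos.mpr hk) x

/-- For i.i.d. real random variables, if the sample mean of size `s` stochastically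
dominates the sample mean of size `t`, then for every positive integer `k`,
the sample mean of size `k*s` stochastically dominates that of size `k*t`. -/
theorem sampleMean_stochDom_of_blocks {Ω : Type*} [MeasurableSpace Ω]
    (μ : Measure Ω) [IsProbabilityMeasure μ]
    (X : ℕ → Ω → ℝ) (hmeas : ∀ i, Measurable (X i))
    (hindep : iIndepFun X μ)
    (hident : ∀ i, μ.map (X i) = μ.map (X 0))
    (s t : ℕ) (hs : 0 < s) (ht : 0 < t)
    (hdom : ∀ x : ℝ,
      μ {ω | (∑ i ∈ Finset.range s, X i ω) / (s : ℝ) ≤ x}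
        ≤ μ {ω | (∑ i ∈ Finset.range t, X i ω) / (t : ℝ) ≤ x})
    (k : ℕ) (hk : 0 < k) :
    ∀ x : ℝ,
      μ {ω | (∑ i ∈ Finset.range (k * s), X i ω) / ((k * s : ℕ) : ℝ) ≤ x}
        ≤ μ {ω | (∑ i ∈ Finset.range (k * t), X i ω) / ((k * t : ℕ) : ℝ) ≤ x} :=
  sampleMean_stochDom_of_blocks_general μ X hmeas hindep hident s t hdom k hk
end

section
/- Let X₁, X₂, ... be i.i.d. real random variables and suppose X̄_s ≥_st X₁ for some integer s ≥ 2. Let η = (η₁,...,η_k) be a vector of nonnegative weights and let θ be obtained from η by replacing the j-th coordinate η_j by s equal coordinates η_j/s each (an s-split). Then θ₁X₁ + ... + θ_{k+s-1}X_{k+s-1} ≥_st η₁X₁ + ... + η_kX_k. -/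
/-!
Write the `η`-combination as `η_j X_j + W` and the `θ`-combination as
`(η_j / s)(X_j + ⋯ + X_{j+s-1}) + W'`, where `W` and `W'` are the same weighted sum of `k - 1`
distinct variables of the i.i.d. family, hence equidistributed, and independent of the remaining
term. By identical distribution the hypothesis `X̄_s ≥_st X₁` transfers to the block starting at
`j`, and multiplying by `η_j ≥ 0` keeps it. Conditioning on the independent summand (Fubini) shows
that adding equidistributed independent terms preserves `≥_st`.
-/

open MeasureTheory ProbabilityTheory Finset

theorem Finset.sum_range_erase_eq_sum_range_add_sum_Ico {M : Type*} [AddCommMonoid M]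
    [IsLeftCancelAdd M] (f : ℕ → M) {j k : ℕ} (hj : j < k) :
    ∑ i ∈ (range k).erase j, f i = ∑ i ∈ range j, f i + ∑ i ∈ Ico (j + 1) k, f i := by
  have h := add_sum_erase _ f (mem_range.mpr hj)
  rw [← sum_range_add_sum_Ico _ hj.le, sum_eq_sum_Ico_succ_bot hj, add_left_comm] at h
  exact add_left_cancel h

/-- The position in the `s`-split of `η` at `j` of the coordinate `η i`, for `i ≠ j`. -/
def splitIndex (j s i : ℕ) : ℕ := if i < j then i else i + s - 1

theorem splitIndex_injOn (j s : ℕ) : Set.InjOn (splitIndex j s) {j}ᶜ := by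
  intro a ha b hb hab
  simp only [Set.mem_compl_iff, Set.mem_singleton_iff] at ha hb
  simp only [splitIndex] at hab
  split_ifs at hab <;> omega

theorem disjoint_image_add_image_splitIndex {j s : ℕ} {I : Finset ℕ} (hj : j ∉ I) :
    Disjoint ((range s).image (j + ·)) (I.image (splitIndex j s)) := by
  simp only [disjoint_left, mem_image, mem_range, not_exists, not_and]
  rintro _ ⟨m, hm, rfl⟩ i hi hij
  simp only [splitIndex] at hij
  have : i ≠ j := fun h => hj (h ▸ hi)
  split_ifs at hij <;> omega

theorem sum_erase_splitIndex {M : Type*} [AddCommMonoid M] [IsLeftCancelAdd M]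
    (f : ℕ → ℕ → M) {j k : ℕ} (s : ℕ) (hj : j < k) :
    ∑ i ∈ (range k).erase j, f i (splitIndex j s i)
      = ∑ i ∈ range j, f i i + ∑ i ∈ Ico (j + 1) k, f i (i + s - 1) := by
  rw [sum_range_erase_eq_sum_range_add_sum_Ico _ hj]
  congr 1 <;> refine sum_congr rfl fun i hi => ?_
  · rw [splitIndex, if_pos (mem_range.mp hi)]
  · rw [splitIndex, if_neg (by have := (mem_Ico.mp hi).1; omega)]

namespace ProbabilityTheory

variable {Ω : Type*} [MeasurableSpace Ω] {μ : Measure Ω}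

/-- `StochDominates μ T U` is `T ≥_st U`. -/
def StochDominates (μ : Measure Ω) (T U : Ω → ℝ) : Prop :=
  ∀ x, μ {ω | T ω ≤ x} ≤ μ {ω | U ω ≤ x}

namespace StochDominates

variable {T U T' U' : Ω → ℝ}

theorem of_identDistrib (h : StochDominates μ T U) (hT : IdentDistrib T T' μ μ)
    (hU : IdentDistrib U U' μ μ) : StochDominates μ T' U' := fun x =>
  calc μ {ω | T' ω ≤ x} = μ {ω | T ω ≤ x} := (hT.measure_mem_eq measurableSet_Iic).symm
    _ ≤ μ {ω | U ω ≤ x} := h x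
    _ = μ {ω | U' ω ≤ x} := hU.measure_mem_eq measurableSet_Iic

theorem const_mul (h : StochDominates μ T U) {c : ℝ} (hc : 0 ≤ c) :
    StochDominates μ (fun ω => c * T ω) (fun ω => c * U ω) := fun x => by
  rcases hc.eq_or_lt with rfl | hc
  · simp
  · simpa only [mul_comm c, ← le_div_iff₀ hc] using h (x / c)

end StochDominates

theorem measure_add_le_eq_lintegral [IsFiniteMeasure μ] {T W : Ω → ℝ} (hT : AEMeasurable T μ)
    (hW : AEMeasurable W μ) (hTW : T ⟂ᵢ[μ] W) (x : ℝ) :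
    μ {ω | T ω + W ω ≤ x} = ∫⁻ w, μ {ω | T ω ≤ x - w} ∂(μ.map W) := by
  have hs : MeasurableSet {p : ℝ × ℝ | p.2 + p.1 ≤ x} :=
    measurableSet_le (by fun_prop) measurable_const
  calc μ {ω | T ω + W ω ≤ x}
      = μ.map (fun ω => (W ω, T ω)) {p | p.2 + p.1 ≤ x} :=
        (Measure.map_apply_of_aemeasurable (hW.prodMk hT) hs).symm
    _ = ((μ.map W).prod (μ.map T)) {p | p.2 + p.1 ≤ x} := by
        rw [(indepFun_iff_map_prod_eq_prod_map_map hW hT).mp hTW.symm]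
    _ = ∫⁻ w, μ.map T {t | t + w ≤ x} ∂(μ.map W) := Measure.prod_apply hs
    _ = ∫⁻ w, μ {ω | T ω ≤ x - w} ∂(μ.map W) := by
        refine lintegral_congr fun w => ?_
        rw [Measure.map_apply_of_aemeasurable hT (measurableSet_le (by fun_prop) measurable_const)]
        simp only [Set.preimage_ofPred_eq, le_sub_iff_add_le]

theorem StochDominates.add_of_indepFun [IsFiniteMeasure μ] {T₁ T₂ W₁ W₂ : Ω → ℝ}
    (h : StochDominates μ T₁ T₂) (hT₁ : AEMeasurable T₁ μ) (hT₂ : AEMeasurable T₂ μ)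
    (hW : IdentDistrib W₁ W₂ μ μ) (h₁ : T₁ ⟂ᵢ[μ] W₁) (h₂ : T₂ ⟂ᵢ[μ] W₂) :
    StochDominates μ (fun ω => T₁ ω + W₁ ω) (fun ω => T₂ ω + W₂ ω) := fun x => by
  rw [measure_add_le_eq_lintegral hT₁ hW.aemeasurable_fst h₁,
    measure_add_le_eq_lintegral hT₂ hW.aemeasurable_snd h₂, hW.map_eq]
  exact lintegral_mono fun w => h (x - w)

section iIndepFun

variable {ι κ κ' : Type*} {X : ι → Ω → ℝ}

theorem iIndepFun.indepFun_sum_mul_sum [DecidableEq ι] (hX : iIndepFun X μ)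
    (hmeas : ∀ i, Measurable (X i)) {I : Finset κ} {J : Finset κ'} {g : κ → ι} {h : κ' → ι}
    (a : κ → ℝ) (b : κ' → ℝ) (hdisj : Disjoint (I.image g) (J.image h)) :
    (fun ω => ∑ i ∈ I, a i * X (g i) ω) ⟂ᵢ[μ] (fun ω => ∑ i ∈ J, b i * X (h i) ω) := by
  have hF : Measurable fun v : I.image g → ℝ =>
      ∑ i : I, a i * v ⟨g i, mem_image_of_mem g i.2⟩ := by fun_prop
  have hG : Measurable fun v : J.image h → ℝ =>
      ∑ i : J, b i * v ⟨h i, mem_image_of_mem h i.2⟩ := by fun_prop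
  convert (hX.indepFun_finset _ _ hdisj hmeas).comp hF hG using 1 <;> funext ω
  · exact (sum_coe_sort I fun i => a i * X (g i) ω).symm
  · exact (sum_coe_sort J fun i => b i * X (h i) ω).symm

theorem iIndepFun.identDistrib_sum_mul (hX : iIndepFun X μ)
    (hmeas : ∀ i, Measurable (X i)) {ν : Measure ℝ} (hident : ∀ i, μ.map (X i) = ν)
    {I : Finset κ} {g h : κ → ι} (hg : Set.InjOn g I) (hh : Set.InjOn h I) (a : κ → ℝ) :
    IdentDistrib (fun ω => ∑ i ∈ I, a i * X (g i) ω) (fun ω => ∑ i ∈ I, a i * X (h i) ω) μ μ := by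
  have hlaw : ∀ f : κ → ι, Set.InjOn f I →
      μ.map (fun ω (i : I) => X (f i) ω) = Measure.pi fun _ => ν := fun f hf => by
    rw [(hX.precomp (g := fun i : I => f i) hf.injective).map_fun_eq_pi_map
      fun i => (hmeas _).aemeasurable]
    simp only [hident]
  have htuple : IdentDistrib (fun ω (i : I) => X (g i) ω) (fun ω (i : I) => X (h i) ω) μ μ :=
    { aemeasurable_fst := by fun_prop
      aemeasurable_snd := by fun_prop
      map_eq := by rw [hlaw g hg, hlaw h hh] }
  have hF : Measurable fun v : I → ℝ => ∑ i : I, a i * v i := by fun_prop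
  convert htuple.comp hF using 1 <;> funext ω
  · exact (sum_coe_sort I fun i => a i * X (g i) ω).symm
  · exact (sum_coe_sort I fun i => a i * X (h i) ω).symm

end iIndepFun

theorem iIndepFun.stochDominates_block_mean {X : ℕ → Ω → ℝ} (hX : iIndepFun X μ)
    (hmeas : ∀ i, Measurable (X i)) (hident : ∀ i, μ.map (X i) = μ.map (X 0)) {s : ℕ}
    (hdom : StochDominates μ (fun ω => (∑ i ∈ range s, X i ω) / s) (X 0)) {c : ℝ} (hc : 0 ≤ c)
    (j : ℕ) :
    StochDominates μ (fun ω => ∑ m ∈ range s, c / s * X (j + m) ω) (fun ω => c * X j ω) := by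
  have hmean : StochDominates μ (fun ω => ∑ m ∈ range s, c / s * X m ω) (fun ω => c * X 0 ω) := by
    convert hdom.const_mul hc using 2 with ω
    rw [← mul_sum]
    ring
  refine hmean.of_identDistrib ?_ ?_
  · exact hX.identDistrib_sum_mul hmeas hident (Set.injOn_id _) (fun a _ b _ hab => by omega) _
  · exact (IdentDistrib.mk (hmeas 0).aemeasurable (hmeas j).aemeasurable
      (hident j).symm).comp (measurable_const_mul c)

end ProbabilityTheory

theorem split_stochDom_general {Ω : Type*} [MeasurableSpace Ω]
    (μ : Measure Ω) [IsProbabilityMeasure μ]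
    (X : ℕ → Ω → ℝ) (hmeas : ∀ i, Measurable (X i))
    (hindep : iIndepFun X μ)
    (hident : ∀ i, μ.map (X i) = μ.map (X 0))
    (s : ℕ)
    (hdom : ∀ x : ℝ,
      μ {ω | (∑ i ∈ Finset.range s, X i ω) / (s : ℝ) ≤ x} ≤ μ {ω | X 0 ω ≤ x})
    (k : ℕ) (η : ℕ → ℝ) (hη : ∀ i, 0 ≤ η i) (j : ℕ) (hj : j < k) :
    ∀ x : ℝ,
      μ {ω | (∑ i ∈ Finset.range j, η i * X i ω)
            + (∑ m ∈ Finset.range s, (η j / (s : ℝ)) * X (j + m) ω)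
            + (∑ i ∈ Finset.Ico (j + 1) k, η i * X (i + s - 1) ω) ≤ x}
        ≤ μ {ω | ∑ i ∈ Finset.range k, η i * X i ω ≤ x} := by
  classical
  set rest := (range k).erase j
  have hj_rest : j ∉ rest := notMem_erase j _
  have hrest : IdentDistrib (fun ω => ∑ i ∈ rest, η i * X (splitIndex j s i) ω)
      (fun ω => ∑ i ∈ rest, η i * X i ω) μ μ :=
    hindep.identDistrib_sum_mul hmeas hident ((splitIndex_injOn j s).mono (by simpa using hj_rest))
      (Set.injOn_id _) η
  have hsingle : (fun ω => η j * X j ω) ⟂ᵢ[μ] (fun ω => ∑ i ∈ rest, η i * X i ω) := by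
    simpa using hindep.indepFun_sum_mul_sum hmeas (I := {j}) (g := id) (h := id) η η
      (by simpa using hj_rest)
  have hsplit := (hindep.stochDominates_block_mean hmeas hident hdom (hη j) j).add_of_indepFun
    (by fun_prop) (by fun_prop) hrest
    (hindep.indepFun_sum_mul_sum hmeas _ _ (disjoint_image_add_image_splitIndex hj_rest)) hsingle
  intro x
  convert hsplit x using 5 with ω ω
  · dsimp only [rest]
    rw [sum_erase_splitIndex (fun i m => η i * X m ω) s hj]
    ring
  · exact (add_sum_erase _ _ (mem_range.mpr hj)).symm

/-- If `X̄_s ≥_st X₁` for i.i.d. variables, and the weight vector `θ` is obtained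
from the nonnegative weight vector `η = (η 0, …, η (k-1))` by an `s`-split of the
`j`-th coordinate (replacing `η j` by `s` coordinates equal to `η j / s`), then
the `θ`-combination stochastically dominates the `η`-combination. -/
theorem split_stochDom {Ω : Type*} [MeasurableSpace Ω]
    (μ : Measure Ω) [IsProbabilityMeasure μ]
    (X : ℕ → Ω → ℝ) (hmeas : ∀ i, Measurable (X i))
    (hindep : iIndepFun X μ)
    (hident : ∀ i, μ.map (X i) = μ.map (X 0))
    (s : ℕ) (hs : 2 ≤ s)
    (hdom : ∀ x : ℝ,
      μ {ω | (∑ i ∈ Finset.range s, X i ω) / (s : ℝ) ≤ x} ≤ μ {ω | X 0 ω ≤ x})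
    (k : ℕ) (η : ℕ → ℝ) (hη : ∀ i, 0 ≤ η i) (j : ℕ) (hj : j < k) :
    ∀ x : ℝ,
      μ {ω | (∑ i ∈ Finset.range j, η i * X i ω)
            + (∑ m ∈ Finset.range s, (η j / (s : ℝ)) * X (j + m) ω)
            + (∑ i ∈ Finset.Ico (j + 1) k, η i * X (i + s - 1) ω) ≤ x}
        ≤ μ {ω | ∑ i ∈ Finset.range k, η i * X i ω ≤ x} :=
  split_stochDom_general μ X hmeas hindep hident s hdom k η hη j hj
end

section
/- Let θ ∈ ℝ^s and η ∈ ℝ^t be weight vectors, X₁, X₂, ... i.i.d. real random variables, and suppose Σᵢ θᵢ Xᵢ ≥_st Σⱼ ηⱼ Xⱼ. Then for every vector π ∈ ℝ^k with nonnegative entries, Σ_{i=1}^{sk} (θ ⊗ π)ᵢ Xᵢ ≥_st Σ_{j=1}^{tk} (η ⊗ π)ⱼ Xⱼ, where ⊗ denotes the Kronecker product of vectors. -/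
open MeasureTheory ProbabilityTheory Set

/-!
Regroup the double sum by the second Kronecker factor:
`∑ᵢ ∑ₗ θᵢ πₗ X_{ik+l} = ∑ₗ πₗ Yₗ` with `Yₗ = ∑ᵢ θᵢ X_{ik+l}`, and likewise with `Zₗ` for `η`.
The rows `(X_{ik+l})ᵢ` for distinct `l < k` use disjoint sets of indices, so the `Yₗ` are
independent, and each `Yₗ` has the law of `∑ᵢ θᵢ Xᵢ` because the `Xᵢ` are i.i.d.; the same holds
for the `Zₗ`. Stochastic dominance survives multiplication by `πₗ ≥ 0` and convolution of
independent summands, so it passes from `Yₗ` versus `Zₗ` to `∑ₗ πₗ Yₗ` versus `∑ₗ πₗ Zₗ`.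
-/

def StochDominates (ν ν' : Measure ℝ) : Prop :=
  ∀ x, ν (Iic x) ≤ ν' (Iic x)

namespace StochDominates

variable {ν ν' ρ : Measure ℝ}

theorem measure_univ_le (h : StochDominates ν ν') : ν univ ≤ ν' univ :=
  le_of_tendsto_of_tendsto' (tendsto_measure_Iic_atTop ν) (tendsto_measure_Iic_atTop ν') h

theorem trans {ν'' : Measure ℝ} (h : StochDominates ν ν') (h' : StochDominates ν' ν'') :
    StochDominates ν ν'' :=
  fun x => (h x).trans (h' x)

theorem map_const_mul (h : StochDominates ν ν') {c : ℝ} (hc : 0 ≤ c) :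
    StochDominates (ν.map (c * ·)) (ν'.map (c * ·)) := by
  intro x
  rw [Measure.map_apply (measurable_const_mul c) measurableSet_Iic,
    Measure.map_apply (measurable_const_mul c) measurableSet_Iic]
  rcases hc.eq_or_lt with rfl | hc
  · by_cases hx : 0 ≤ x
    · simpa [hx] using h.measure_univ_le
    · simp [hx]
  · have hpre : (c * ·) ⁻¹' Iic x = Iic (x / c) := by
      ext y; simp [le_div_iff₀ hc, mul_comm]
    simpa only [hpre] using h (x / c)

theorem conv_Iic [SFinite ν] [SFinite ρ] (x : ℝ) :
    (ν ∗ ρ) (Iic x) = ∫⁻ y, ν (Iic (x - y)) ∂ρ := by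
  rw [Measure.conv, Measure.map_apply measurable_add measurableSet_Iic,
    Measure.prod_apply_symm (measurable_add measurableSet_Iic)]
  congr! with y
  ext a
  simp [le_sub_iff_add_le]

theorem conv_right [SFinite ν] [SFinite ν'] (h : StochDominates ν ν') (ρ : Measure ℝ) [SFinite ρ] :
    StochDominates (ν ∗ ρ) (ν' ∗ ρ) := fun x => by
  simpa only [conv_Iic] using lintegral_mono fun y => h (x - y)

theorem conv {ρ' : Measure ℝ} [SFinite ν] [SFinite ν'] [SFinite ρ] [SFinite ρ']
    (h : StochDominates ν ν') (hρ : StochDominates ρ ρ') :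
    StochDominates (ν ∗ ρ) (ν' ∗ ρ') := by
  refine (h.conv_right ρ).trans ?_
  rw [Measure.conv_comm ν' ρ, Measure.conv_comm ν' ρ']
  exact hρ.conv_right ν'

end StochDominates

namespace ProbabilityTheory

variable {Ω ι κ 𝓧 : Type*} [MeasurableSpace Ω] [MeasurableSpace 𝓧] {μ : Measure Ω}

theorem iIndepFun.curry {X : ι × κ → Ω → 𝓧} (hX : ∀ p, Measurable (X p)) (h : iIndepFun X μ) :
    iIndepFun (fun i ω j => X (i, j) ω) μ := by
  have := h.isProbabilityMeasure
  have hrow : ∀ i, iIndepFun (fun j => X (i, j)) μ := fun i =>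
    h.precomp (Prod.mk_right_injective i)
  rw [iIndepFun_iff_map_fun_eq_infinitePi_map (fun i => measurable_pi_lambda _ fun j => hX _)]
  have hcomp : (fun ω i j => X (i, j) ω) = MeasurableEquiv.curry ι κ 𝓧 ∘ fun ω p => X p ω := rfl
  rw [hcomp, ← Measure.map_map (MeasurableEquiv.measurable _) (measurable_pi_lambda _ hX),
    h.map_fun_eq_infinitePi_map hX]
  have := fun p => Measure.isProbabilityMeasure_map (μ := μ) (hX p).aemeasurable
  rw [Measure.infinitePi_map_curry (fun i j => μ.map (X (i, j)))]
  congr! with i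
  exact ((hrow i).map_fun_eq_infinitePi_map fun j => hX _).symm

theorem iIndepFun.map_precomp_eq {X : ι → Ω → 𝓧} (hX : ∀ i, Measurable (X i))
    (h : iIndepFun X μ) {ν : Measure 𝓧} (hident : ∀ i, μ.map (X i) = ν)
    {g g' : κ → ι} (hg : g.Injective) (hg' : g'.Injective) :
    μ.map (fun ω j => X (g j) ω) = μ.map (fun ω j => X (g' j) ω) := by
  rw [(h.precomp hg).map_fun_eq_infinitePi_map (fun j => hX _),
    (h.precomp hg').map_fun_eq_infinitePi_map (fun j => hX _)]
  simp only [hident]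

end ProbabilityTheory

namespace StochDominates

variable {Ω Ω' ι κ J : Type*} [MeasurableSpace Ω] [MeasurableSpace Ω'] {μ : Measure Ω}
  {μ' : Measure Ω'}

theorem map_sum_of_iIndepFun {U : ι → Ω → ℝ} {V : ι → Ω' → ℝ}
    (hU : ∀ i, Measurable (U i)) (hV : ∀ i, Measurable (V i))
    (hUind : iIndepFun U μ) (hVind : iIndepFun V μ')
    (h : ∀ i, StochDominates (μ.map (U i)) (μ'.map (V i))) (A : Finset ι) :
    StochDominates (μ.map fun ω => ∑ i ∈ A, U i ω) (μ'.map fun ω => ∑ i ∈ A, V i ω) := by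
  classical
  have := hUind.isProbabilityMeasure
  have := hVind.isProbabilityMeasure
  simp only [← Finset.sum_apply]
  induction A using Finset.induction_on with
  | empty =>
    intro x
    simp [Measure.map_const]
  | insert a A ha ih =>
    rw [Finset.sum_insert ha, Finset.sum_insert ha, add_comm, add_comm (V a),
      (hUind.indepFun_finsetSum_of_notMem hU ha).map_add_eq_map_conv_map
        (by fun_prop) (hU a),
      (hVind.indepFun_finsetSum_of_notMem hV ha).map_add_eq_map_conv_map
        (by fun_prop) (hV a)]
    exact ih.conv (h a)

theorem map_sum_rows {X : ι → Ω → ℝ} (hX : ∀ i, Measurable (X i))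
    (hindep : iIndepFun X μ) {ν : Measure ℝ} (hident : ∀ i, μ.map (X i) = ν)
    {e : J × κ → ι} (he : e.Injective) {g : κ → ι} (hg : g.Injective)
    {f f' : (κ → ℝ) → ℝ} (hf : Measurable f) (hf' : Measurable f')
    (hdom : StochDominates (μ.map fun ω => f fun j => X (g j) ω)
      (μ.map fun ω => f' fun j => X (g j) ω))
    {c : J → ℝ} (hc : ∀ l, 0 ≤ c l) (A : Finset J) :
    StochDominates (μ.map fun ω => ∑ l ∈ A, c l * f fun j => X (e (l, j)) ω)
      (μ.map fun ω => ∑ l ∈ A, c l * f' fun j => X (e (l, j)) ω) := by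
  have hrow : ∀ l, Measurable fun ω j => X (e (l, j)) ω := fun l =>
    measurable_pi_lambda _ fun j => hX _
  have hXg : Measurable fun ω j => X (g j) ω := measurable_pi_lambda _ fun j => hX _
  have hrows : iIndepFun (fun l ω j => X (e (l, j)) ω) μ :=
    (hindep.precomp he).curry fun p => hX _
  have hlaw : ∀ (φ : (κ → ℝ) → ℝ), Measurable φ → ∀ l,
      μ.map (fun ω => c l * φ fun j => X (e (l, j)) ω) =
        (μ.map fun ω => φ fun j => X (g j) ω).map (c l * ·) := by
    intro φ hφ l
    have hcf : Measurable fun v => c l * φ v := hφ.const_mul _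
    calc μ.map (fun ω => c l * φ fun j => X (e (l, j)) ω)
        = (μ.map fun ω j => X (e (l, j)) ω).map (fun v => c l * φ v) :=
          (Measure.map_map hcf (hrow l)).symm
      _ = (μ.map fun ω => φ fun j => X (g j) ω).map (c l * ·) := by
        rw [hindep.map_precomp_eq hX hident (g := fun j => e (l, j))
            (he.comp (Prod.mk_right_injective l)) hg,
          Measure.map_map hcf hXg]
        exact (Measure.map_map (measurable_const_mul _) (hφ.comp hXg)).symm
  refine map_sum_of_iIndepFun (fun l => (hf.comp (hrow l)).const_mul _)
    (fun l => (hf'.comp (hrow l)).const_mul _) (hrows.comp _ fun l => hf.const_mul (c l))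
    (hrows.comp _ fun l => hf'.const_mul (c l)) (fun l => ?_) A
  simp only [Function.comp_def]
  rw [hlaw f hf, hlaw f' hf']
  exact hdom.map_const_mul (hc l)

end StochDominates

theorem mul_add_fin_injective (k : ℕ) : Function.Injective fun p : Fin k × ℕ => p.2 * k + p.1 := by
  rintro ⟨l, i⟩ ⟨l', i'⟩ h
  have hk : 0 < k := l.pos
  have hl : l = l' := Fin.ext <| by
    simpa [Nat.add_mod, Nat.mod_eq_of_lt l.isLt, Nat.mod_eq_of_lt l'.isLt] using congrArg (· % k) h
  subst hl
  simpa [hk.ne'] using h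

theorem kronecker_stochDom_general {Ω : Type*} [MeasurableSpace Ω]
    (μ : Measure Ω)
    (X : ℕ → Ω → ℝ) (hmeas : ∀ i, Measurable (X i))
    (hindep : iIndepFun X μ)
    (hident : ∀ i, μ.map (X i) = μ.map (X 0))
    (s t : ℕ) (θ η : ℕ → ℝ)
    (hdom : ∀ x : ℝ,
      μ {ω | ∑ i ∈ Finset.range s, θ i * X i ω ≤ x}
        ≤ μ {ω | ∑ j ∈ Finset.range t, η j * X j ω ≤ x})
    (k : ℕ) (π : ℕ → ℝ) (hπ : ∀ l, 0 ≤ π l) :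
    ∀ x : ℝ,
      μ {ω | ∑ i ∈ Finset.range s, ∑ l ∈ Finset.range k, θ i * π l * X (i * k + l) ω ≤ x}
        ≤ μ {ω | ∑ j ∈ Finset.range t, ∑ l ∈ Finset.range k, η j * π l * X (j * k + l) ω ≤ x} := by
  let F (c : ℕ → ℝ) (n : ℕ) (v : ℕ → ℝ) : ℝ := ∑ i ∈ Finset.range n, c i * v i
  have hF : ∀ c n, Measurable (F c n) := fun c n => by fun_prop
  have hdom' : StochDominates (μ.map fun ω => F θ s fun i => X i ω)
      (μ.map fun ω => F η t fun i => X i ω) := fun x => by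
    rw [Measure.map_apply (by fun_prop) measurableSet_Iic,
      Measure.map_apply (by fun_prop) measurableSet_Iic]
    exact hdom x
  have hblocks := hdom'.map_sum_rows hmeas hindep hident (mul_add_fin_injective k)
    Function.injective_id (hF θ s) (hF η t) (c := fun l : Fin k => π l) (fun l => hπ l) .univ
  have hrearr : ∀ c n ω, ∑ l : Fin k, π l * F c n (fun i => X (i * k + l) ω) =
      ∑ i ∈ Finset.range n, ∑ l ∈ Finset.range k, c i * π l * X (i * k + l) ω := by
    intro c n ω
    simp only [F, Finset.mul_sum]
    rw [Fin.sum_univ_eq_sum_range (fun l => ∑ i ∈ Finset.range n, π l * (c i * X (i * k + l) ω)),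
      Finset.sum_comm]
    exact Finset.sum_congr rfl fun i _ => Finset.sum_congr rfl fun l _ => by ring
  intro x
  have := hblocks x
  rw [Measure.map_apply (by fun_prop) measurableSet_Iic,
    Measure.map_apply (by fun_prop) measurableSet_Iic] at this
  simpa only [Set.preimage, Set.mem_Iic, hrearr] using this

/-- If `Σᵢ θᵢ Xᵢ ≥_st Σⱼ ηⱼ Xⱼ` for i.i.d. variables, then for every
nonnegative vector `π ∈ ℝ^k`, the Kronecker products satisfy
`Σ (θ ⊗ π)ᵢ Xᵢ ≥_st Σ (η ⊗ π)ⱼ Xⱼ`. -/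
theorem kronecker_stochDom {Ω : Type*} [MeasurableSpace Ω]
    (μ : Measure Ω) [IsProbabilityMeasure μ]
    (X : ℕ → Ω → ℝ) (hmeas : ∀ i, Measurable (X i))
    (hindep : iIndepFun X μ)
    (hident : ∀ i, μ.map (X i) = μ.map (X 0))
    (s t : ℕ) (θ η : ℕ → ℝ)
    (hdom : ∀ x : ℝ,
      μ {ω | ∑ i ∈ Finset.range s, θ i * X i ω ≤ x}
        ≤ μ {ω | ∑ j ∈ Finset.range t, η j * X j ω ≤ x})
    (k : ℕ) (π : ℕ → ℝ) (hπ : ∀ l, 0 ≤ π l) :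
    ∀ x : ℝ,
      μ {ω | ∑ i ∈ Finset.range s, ∑ l ∈ Finset.range k, θ i * π l * X (i * k + l) ω ≤ x}
        ≤ μ {ω | ∑ j ∈ Finset.range t, ∑ l ∈ Finset.range k, η j * π l * X (j * k + l) ω ≤ x} :=
  kronecker_stochDom_general μ X hmeas hindep hident s t θ η hdom k π hπ
end

section
/- Let F be a cumulative distribution function with F(0) = 0 such that H(x) = 1 − F(1/x) is concave on (0,∞). Then F belongs to class 𝓛: for all 0 ≤ y ≤ x, the function V(z) = F(x + yz) + F(x + y/z) is nonincreasing in z ∈ (0,1]. -/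
/-! Substituting `t = 1 / u`, the points `x + y z ≤ x + y w ≤ x + y / w ≤ x + y / z` become
`u₁ ≥ u₂ ≥ v₂ ≥ v₁` with `u₁ - u₂ ≤ v₂ - v₁`, and `G t = F (1 / t)` is convex and nonincreasing.
By convexity `G` drops over `[u₂, u₁]` by no more than over the equally long interval starting at
`v₁`, and since `G` is nonincreasing that is at most its drop over `[v₁, v₂]`. -/

open Set

section
variable {𝕜 : Type*} [Field 𝕜] [LinearOrder 𝕜] [IsStrictOrderedRing 𝕜] {s : Set 𝕜} {f : 𝕜 → 𝕜}

theorem ConvexOn.map_add_map_le_of_add_eq (hf : ConvexOn 𝕜 s f) {a c p q : 𝕜}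
    (ha : a ∈ s) (hc : c ∈ s) (hap : a ≤ p) (hpc : p ≤ c) (haq : a ≤ q) (hqc : q ≤ c)
    (hsum : p + q = a + c) : f p + f q ≤ f a + f c := by
  obtain rfl | hac := (hap.trans hpc).eq_or_lt
  · rw [le_antisymm hpc hap, le_antisymm hqc haq]
  have hL : 0 < c - a := sub_pos.2 hac
  set μ := (p - a) / (c - a)
  -- `p` and `q` divide `[a, c]` in the ratios `μ : 1 - μ` and `1 - μ : μ`
  have hμ₀ : 0 ≤ μ := div_nonneg (sub_nonneg.2 hap) hL.le
  have hμ₁ : μ ≤ 1 := (div_le_one hL).2 (by linarith)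
  have hp : p = (1 - μ) * a + μ * c := by simp only [μ]; field_simp; ring
  have hq : q = μ * a + (1 - μ) * c := by linear_combination hsum - hp
  have h₁ := hf.2 ha hc (sub_nonneg.2 hμ₁) hμ₀ (sub_add_cancel 1 μ)
  have h₂ := hf.2 ha hc hμ₀ (sub_nonneg.2 hμ₁) (add_sub_cancel μ 1)
  simp only [smul_eq_mul, ← hp, ← hq] at h₁ h₂
  linarith

theorem ConvexOn.map_add_map_le_of_sub_le (hf : ConvexOn 𝕜 s f) (hf' : AntitoneOn f s)
    {v₁ v₂ u₁ u₂ : 𝕜} (hv₁ : v₁ ∈ s) (hv₂ : v₂ ∈ s) (hu₁ : u₁ ∈ s)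
    (hvu : v₁ ≤ u₂) (hu : u₂ ≤ u₁) (hlen : u₁ - u₂ ≤ v₂ - v₁) :
    f u₂ + f v₂ ≤ f u₁ + f v₁ := by
  have hs := hf.1.ordConnected
  set p := v₁ + (u₁ - u₂)
  have hpv : p ≤ v₂ := by linarith
  have hpu : p ≤ u₁ := by linarith
  have hp : p ∈ s := hs.out hv₁ hv₂ ⟨by linarith, hpv⟩
  have key := hf.map_add_map_le_of_add_eq hv₁ hu₁ (by linarith) hpu hvu hu (by ring)
  linarith [hf' hp hv₂ hpv]

end

theorem Monotone.map_add_map_le_of_inv_sub_le {F : ℝ → ℝ} (hF : Monotone F)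
    (hconv : ConvexOn ℝ (Ioi 0) (fun t => F t⁻¹)) {a₁ a₂ b₁ b₂ : ℝ} (ha₁ : 0 < a₁)
    (hb₂ : 0 < b₂) (ha : a₁ ≤ a₂) (hab : a₂ ≤ b₁)
    (hlen : a₁⁻¹ - a₂⁻¹ ≤ b₂⁻¹ - b₁⁻¹) :
    F a₂ + F b₂ ≤ F a₁ + F b₁ := by
  have hanti : AntitoneOn (fun t => F t⁻¹) (Ioi 0) := fun s hs t _ hst =>
    hF (inv_anti₀ hs hst)
  have ha₂ := ha₁.trans_le ha
  have hb₁ := ha₂.trans_le hab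
  simpa only [inv_inv] using hconv.map_add_map_le_of_sub_le hanti (inv_pos.2 hb₁)
    (inv_pos.2 hb₂) (inv_pos.2 ha₁) (inv_anti₀ ha₂ hab) (inv_anti₀ ha₁ ha)
    (by simpa only [inv_inv] using hlen)

theorem inv_sub_inv_le_inv_div_sub_inv_div {x y z w : ℝ} (hx : 0 < x) (hy : 0 ≤ y) (hyx : y ≤ x)
    (hz : 0 < z) (hzw : z ≤ w) (hw : w ≤ 1) :
    (x + y * z)⁻¹ - (x + y * w)⁻¹ ≤ (x + y / w)⁻¹ - (x + y / z)⁻¹ := by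
  have hw₀ := hz.trans_le hzw
  have e₁ : (x + y * z)⁻¹ - (x + y * w)⁻¹ = y * (w - z) / ((x + y * z) * (x + y * w)) := by
    rw [inv_sub_inv (by positivity) (by positivity)]; ring
  have e₂ : (x + y / w)⁻¹ - (x + y / z)⁻¹ = y * (w - z) / ((z * x + y) * (w * x + y)) := by
    rw [inv_sub_inv (by positivity) (by positivity)]; field_simp; ring
  have hden : (z * x + y) * (w * x + y) ≤ (x + y * z) * (x + y * w) := by
    have hxy := sub_nonneg.2 hyx
    gcongr ?_ * ?_
    · nlinarith [mul_nonneg hxy (sub_nonneg.2 (hzw.trans hw))]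
    · nlinarith [mul_nonneg hxy (sub_nonneg.2 hw)]
  rw [e₁, e₂]
  exact div_le_div_of_nonneg_left (mul_nonneg hy (sub_nonneg.2 hzw)) (by positivity) hden

open Filter

theorem concaveInverted_mem_classL_general (F : ℝ → ℝ)
    (hmono : Monotone F)
    (hconc : ConcaveOn ℝ (Set.Ioi 0) (fun x => 1 - F (1 / x))) :
    ∀ x y : ℝ, 0 ≤ y → y ≤ x →
      AntitoneOn (fun z => F (x + y * z) + F (x + y / z)) (Set.Ioc 0 1) := by
  intro x y hy hyx z ⟨hz, hz₁⟩ w ⟨hw, hw₁⟩ hzw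
  obtain rfl | hy := hy.eq_or_lt
  · simp
  have hx := hy.trans_le hyx
  have hconv : ConvexOn ℝ (Ioi 0) (fun t => F t⁻¹) := by
    refine (hconc.neg.add_const 1).congr fun t _ => ?_
    simp [one_div]
  apply hmono.map_add_map_le_of_inv_sub_le hconv (by positivity) (by positivity)
  · gcongr
  · gcongr
    exact (mul_le_of_le_one_right hy.le hw₁).trans (le_div_self hy.le hz hz₁)
  · exact inv_sub_inv_le_inv_div_sub_inv_div hx hy.le hyx hz hzw hw₁

/-- If `F` is a CDF with `F 0 = 0` such that `H x = 1 − F (1/x)` is concave on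
`(0, ∞)`, then `F` is of class `𝓛`: for all `0 ≤ y ≤ x`, the function
`z ↦ F (x + y z) + F (x + y / z)` is nonincreasing on `(0, 1]`. -/
theorem concaveInverted_mem_classL (F : ℝ → ℝ)
    (hmono : Monotone F)
    (hrc : ∀ x, ContinuousWithinAt F (Set.Ici x) x)
    (hbot : Tendsto F atBot (nhds 0))
    (htop : Tendsto F atTop (nhds 1))
    (hF0 : F 0 = 0)
    (hconc : ConcaveOn ℝ (Set.Ioi 0) (fun x => 1 - F (1 / x))) :
    ∀ x y : ℝ, 0 ≤ y → y ≤ x →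
      AntitoneOn (fun z => F (x + y * z) + F (x + y / z)) (Set.Ioc 0 1) :=
  concaveInverted_mem_classL_general F hmono hconc
end

section
/- Let F be a CDF in class 𝓛 (i.e., F(0)=0 and for all 0 ≤ y ≤ x, z ↦ F(x+yz) + F(x+y/z) is nonincreasing on (0,1]), and let X₁, X₂ be i.i.d. with CDF F. If 0 ≤ η ≤ θ ≤ 1/2, then θX₁ + (1−θ)X₂ ≥_st ηX₁ + (1−η)X₂. -/
/-!
Since `ν ⊗ ν` is invariant under swapping coordinates, the probability of
`{θ p.1 + (1 - θ) p.2 ≤ t}` is the sum of the masses of `{θ v + (1 - θ) u ≤ t}` and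
`{θ u + (1 - θ) v ≤ t}` over the pairs `(v, u)` with `v < u`, plus a diagonal term that does not
depend on `θ`. Passing from `θ` to `η ≤ θ` shrinks the first set and enlarges the second, so it
suffices to compare, for each `v`, the `ν`-masses in `u` of what is lost and what is gained.
These are intervals whose endpoints are `x + y z` and `x + y / z` with `x = t`, `y = t - v` and
`z = θ / (1 - θ)` or `η / (1 - η)`, so the comparison is the class `𝓛` monotonicity between these
two values of `z` (for `η = 0`, its limit as `z → 0⁺`). Since `F 0 = 0`, almost surely `v > 0`,
which gives `y ≤ x`.
-/

open MeasureTheory ProbabilityTheory Set Filter Topology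

/-- Class `𝓛` without its normalisation `F 0 = 0`. -/
def IsClassL (F : ℝ → ℝ) : Prop :=
  ∀ x y : ℝ, 0 ≤ y → y ≤ x → AntitoneOn (fun z => F (x + y * z) + F (x + y / z)) (Ioc 0 1)

section ClassL

variable {F : ℝ → ℝ} {ν : Measure ℝ}

lemma add_at_mix_thresholds_eq {a : ℝ} (t v : ℝ) (ha : 0 < a) (ha1 : a < 1) :
    F ((t - a * v) / (1 - a)) + F ((t - (1 - a) * v) / a)
      = (fun z => F (t + (t - v) * z) + F (t + (t - v) / z)) (a / (1 - a)) := by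
  have h1a : 1 - a ≠ 0 := by linarith
  have hB : (t - a * v) / (1 - a) = t + (t - v) * (a / (1 - a)) := by field_simp; ring
  have hA : (t - (1 - a) * v) / a = t + (t - v) / (a / (1 - a)) := by
    rw [div_div_eq_mul_div]; field_simp; ring
  rw [hB, hA]

lemma div_one_sub_mem_Ioc {a : ℝ} (ha : 0 < a) (ha2 : a ≤ 1 / 2) : a / (1 - a) ∈ Ioc 0 1 :=
  ⟨div_pos ha (by linarith), (div_le_one (by linarith)).mpr (by linarith)⟩

lemma IsClassL.mix_le (hL : IsClassL F) {t v θ η : ℝ} (hv : 0 ≤ v) (hvt : v ≤ t)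
    (hη : 0 < η) (hηθ : η ≤ θ) (hθ : θ ≤ 1 / 2) :
    F ((t - θ * v) / (1 - θ)) + F ((t - (1 - θ) * v) / θ)
      ≤ F ((t - η * v) / (1 - η)) + F ((t - (1 - η) * v) / η) := by
  have hθ0 : 0 < θ := hη.trans_le hηθ
  rw [add_at_mix_thresholds_eq t v hθ0 (by linarith), add_at_mix_thresholds_eq t v hη (by linarith)]
  refine hL t (t - v) (by linarith) (by linarith) (div_one_sub_mem_Ioc hη (hηθ.trans hθ))
    (div_one_sub_mem_Ioc hθ0 hθ) ?_
  exact div_le_div₀ (by linarith) hηθ (by linarith) (by linarith)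

/-- Letting `z → 0⁺` in class `𝓛`: `F (x + y z) → F x` by right continuity and `F ≤ 1`. -/
lemma IsClassL.cdf_add_le (hL : IsClassL (cdf ν)) {x y z : ℝ} (hy : 0 ≤ y) (hyx : y ≤ x)
    (hz : z ∈ Ioc 0 1) :
    cdf ν (x + y * z) + cdf ν (x + y / z) ≤ cdf ν x + 1 := by
  have hlim : Tendsto (fun w => cdf ν (x + y * w) + 1) (𝓝[>] 0) (𝓝 (cdf ν x + 1)) := by
    refine Tendsto.add_const 1 ((cdf ν).right_continuous x |>.tendsto.comp ?_)
    refine tendsto_nhdsWithin_iff.mpr ⟨?_, ?_⟩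
    · simpa using (tendsto_nhdsWithin_of_tendsto_nhds
        (Continuous.tendsto (by fun_prop : Continuous fun w : ℝ => x + y * w) 0))
    · filter_upwards [self_mem_nhdsWithin] with w hw
      exact le_add_of_nonneg_right (mul_nonneg hy (le_of_lt hw))
  refine ge_of_tendsto hlim ?_
  filter_upwards [Ioc_mem_nhdsGT hz.1] with w hw
  calc cdf ν (x + y * z) + cdf ν (x + y / z)
      ≤ cdf ν (x + y * w) + cdf ν (x + y / w) :=
        hL x y hy hyx ⟨hw.1, hw.2.trans hz.2⟩ hz hw.2
    _ ≤ cdf ν (x + y * w) + 1 := by gcongr; exact cdf_le_one ν _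

lemma IsClassL.mix_le_cdf_add_one (hL : IsClassL (cdf ν)) {t v θ : ℝ} (hv : 0 ≤ v)
    (hvt : v ≤ t) (hθ0 : 0 < θ) (hθ : θ ≤ 1 / 2) :
    cdf ν ((t - θ * v) / (1 - θ)) + cdf ν ((t - (1 - θ) * v) / θ) ≤ cdf ν t + 1 := by
  rw [add_at_mix_thresholds_eq t v hθ0 (by linarith)]
  exact hL.cdf_add_le (by linarith) (by linarith) (div_one_sub_mem_Ioc hθ0 hθ)

end ClassL

section Slice

variable {ν : Measure ℝ} [IsProbabilityMeasure ν]

lemma measure_Ioc_eq_cdf (a b : ℝ) : ν (Ioc a b) = ENNReal.ofReal (cdf ν b - cdf ν a) := by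
  rw [← (cdf ν).measure_Ioc, measure_cdf]

lemma measure_Ioi_eq_cdf (a : ℝ) : ν (Ioi a) = ENNReal.ofReal (1 - cdf ν a) := by
  rw [← (cdf ν).measure_Ioi (tendsto_cdf_atTop ν), measure_cdf]

lemma IsClassL.measure_Ioc_le_measure_Ioc (hL : IsClassL (cdf ν)) {t v θ η : ℝ} (hv : 0 ≤ v)
    (hvt : v ≤ t) (hη : 0 < η) (hηθ : η ≤ θ) (hθ : θ ≤ 1 / 2) :
    ν (Ioc ((t - η * v) / (1 - η)) ((t - θ * v) / (1 - θ)))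
      ≤ ν (Ioc ((t - (1 - θ) * v) / θ) ((t - (1 - η) * v) / η)) := by
  rw [measure_Ioc_eq_cdf, measure_Ioc_eq_cdf]
  exact ENNReal.ofReal_le_ofReal (by linarith [hL.mix_le hv hvt hη hηθ hθ])

lemma IsClassL.measure_Ioc_le_measure_Ioi (hL : IsClassL (cdf ν)) {t v θ : ℝ} (hv : 0 ≤ v)
    (hvt : v ≤ t) (hθ0 : 0 < θ) (hθ : θ ≤ 1 / 2) :
    ν (Ioc t ((t - θ * v) / (1 - θ))) ≤ ν (Ioi ((t - (1 - θ) * v) / θ)) := by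
  rw [measure_Ioc_eq_cdf, measure_Ioi_eq_cdf]
  exact ENNReal.ofReal_le_ofReal (by linarith [hL.mix_le_cdf_add_one hv hvt hθ0 hθ])

lemma IsClassL.measure_slice_le (hL : IsClassL (cdf ν)) {t θ η v : ℝ} (hη0 : 0 ≤ η)
    (hηθ : η ≤ θ) (hθ : θ ≤ 1 / 2) (hv : 0 ≤ v) :
    ν {u | v < u ∧ θ * v + (1 - θ) * u ≤ t ∧ t < η * v + (1 - η) * u}
      ≤ ν {u | v < u ∧ η * u + (1 - η) * v ≤ t ∧ t < θ * u + (1 - θ) * v} := by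
  by_cases hempty : t < v ∨ η = θ
  · have : {u | v < u ∧ θ * v + (1 - θ) * u ≤ t ∧ t < η * v + (1 - η) * u} = ∅ := by
      ext u
      simp only [mem_ofPred_eq, mem_empty_iff_false, iff_false, not_and, not_lt]
      intro hvu hθu
      rcases hempty with htv | rfl
      · nlinarith
      · exact hθu
    simp [this]
  push Not at hempty
  obtain ⟨hvt, hηθ'⟩ := hempty
  have hθ0 : 0 < θ := hη0.trans_lt (lt_of_le_of_ne hηθ hηθ')
  have h1θ : 0 < 1 - θ := by linarith
  have h1η : 0 < 1 - η := by linarith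
  calc ν {u | v < u ∧ θ * v + (1 - θ) * u ≤ t ∧ t < η * v + (1 - η) * u}
      ≤ ν (Ioc ((t - η * v) / (1 - η)) ((t - θ * v) / (1 - θ))) := by
        refine measure_mono fun u ⟨_, hθu, hηu⟩ => ⟨?_, ?_⟩
        · rw [div_lt_iff₀ h1η]; linarith
        · rw [le_div_iff₀ h1θ]; linarith
    _ ≤ _ := by
        rcases hη0.eq_or_lt with rfl | hη
        · rw [zero_mul, sub_zero, sub_zero, div_one]
          refine (hL.measure_Ioc_le_measure_Ioi hv hvt hθ0 hθ).trans
            (measure_mono fun u (hu : _ < u) => ?_)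
          rw [div_lt_iff₀ hθ0] at hu
          exact ⟨by nlinarith, by linarith, by linarith⟩
        · refine (hL.measure_Ioc_le_measure_Ioc hv hvt hη hηθ hθ).trans
            (measure_mono fun u ⟨hθu, hηu⟩ => ?_)
          rw [div_lt_iff₀ hθ0] at hθu
          rw [le_div_iff₀ hη] at hηu
          exact ⟨by nlinarith, by linarith, by linarith⟩

end Slice

lemma measure_eq_lt_add_swap_lt_add_diag {π : Measure (ℝ × ℝ)} (hπ : π.map Prod.swap = π)
    {S : Set (ℝ × ℝ)} (hS : MeasurableSet S) :
    π S = π (S ∩ {p | p.1 < p.2}) + π (Prod.swap ⁻¹' S ∩ {p | p.1 < p.2})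
      + π (S ∩ {p | p.1 = p.2}) := by
  have hlt : MeasurableSet {p : ℝ × ℝ | p.1 < p.2} := measurableSet_lt measurable_fst measurable_snd
  have hgt : MeasurableSet {p : ℝ × ℝ | p.2 < p.1} := measurableSet_lt measurable_snd measurable_fst
  have hswap : π (S ∩ {p | p.2 < p.1}) = π (Prod.swap ⁻¹' S ∩ {p | p.1 < p.2}) := by
    conv_rhs => rw [← hπ, Measure.map_apply measurable_swap
      ((hS.preimage measurable_swap).inter hlt)]
    rfl
  have hsplit : S = (S ∩ {p | p.1 < p.2} ∪ S ∩ {p | p.2 < p.1}) ∪ S ∩ {p | p.1 = p.2} := by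
    ext p
    simp only [mem_union, mem_inter_iff, mem_ofPred_eq]
    constructor
    · intro hp
      rcases lt_trichotomy p.1 p.2 with h | h | h <;> simp [hp, h]
    · rintro ((h | h) | h) <;> exact h.1
  have hdisj : Disjoint (S ∩ {p | p.1 < p.2}) (S ∩ {p | p.2 < p.1}) :=
    disjoint_left.mpr fun p h h' => lt_asymm (show p.1 < p.2 from h.2) h'.2
  have hdisj' : Disjoint (S ∩ {p | p.1 < p.2} ∪ S ∩ {p | p.2 < p.1}) (S ∩ {p | p.1 = p.2}) :=
    disjoint_left.mpr fun p h (h' : _ ∧ p.1 = p.2) => by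
      rcases h with ⟨-, h⟩ | ⟨-, h⟩
      exacts [(show p.1 < p.2 from h).ne h'.2, (show p.2 < p.1 from h).ne' h'.2]
  conv_lhs => rw [hsplit]
  rw [measure_union hdisj' (hS.inter (measurableSet_eq_fun measurable_fst measurable_snd)),
    measure_union hdisj (hS.inter hgt), hswap]

lemma measure_add_sdiff_of_subset {α : Type*} [MeasurableSpace α] {π : Measure α} {s t : Set α}
    (hs : MeasurableSet s) (hst : s ⊆ t) : π t = π s + π (t \ s) := by
  rw [measure_add_sdiff hs.nullMeasurableSet, union_eq_self_of_subset_left hst]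

lemma measure_prod_mix_le_of_slice_le {ν : Measure ℝ} [SFinite ν] {t θ η : ℝ} (hηθ : η ≤ θ)
    (hslice : ∀ᵐ v ∂ν, ν {u | v < u ∧ θ * v + (1 - θ) * u ≤ t ∧ t < η * v + (1 - η) * u}
        ≤ ν {u | v < u ∧ η * u + (1 - η) * v ≤ t ∧ t < θ * u + (1 - θ) * v}) :
    ν.prod ν {p | θ * p.1 + (1 - θ) * p.2 ≤ t} ≤ ν.prod ν {p | η * p.1 + (1 - η) * p.2 ≤ t} := by
  set E : ℝ → Set (ℝ × ℝ) := fun a => {p | a * p.1 + (1 - a) * p.2 ≤ t}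
  set L : Set (ℝ × ℝ) := {p | p.1 < p.2}
  have hE a : MeasurableSet (E a) := measurableSet_le (by fun_prop) measurable_const
  have hL : MeasurableSet L := measurableSet_lt measurable_fst measurable_snd
  have hlow : E η ∩ L ⊆ E θ ∩ L := fun p ⟨hp, (hpL : p.1 < p.2)⟩ =>
    ⟨by simp only [E, mem_ofPred_eq] at hp ⊢; nlinarith, hpL⟩
  have hhigh : Prod.swap ⁻¹' E θ ∩ L ⊆ Prod.swap ⁻¹' E η ∩ L :=
    fun p ⟨hp, (hpL : p.1 < p.2)⟩ => ⟨by
      simp only [E, mem_preimage, mem_ofPred_eq, Prod.fst_swap, Prod.snd_swap] at hp ⊢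
      nlinarith, hpL⟩
  have hdiag : E θ ∩ {p | p.1 = p.2} = E η ∩ {p | p.1 = p.2} := by
    ext p
    simp only [E, mem_inter_iff, mem_ofPred_eq]
    constructor <;> rintro ⟨hp, hp'⟩ <;> rw [hp'] at hp ⊢ <;> exact ⟨by linarith, rfl⟩
  have hcore : ν.prod ν ((E θ ∩ L) \ (E η ∩ L))
      ≤ ν.prod ν ((Prod.swap ⁻¹' E η ∩ L) \ (Prod.swap ⁻¹' E θ ∩ L)) := by
    rw [Measure.prod_apply (((hE θ).inter hL).diff ((hE η).inter hL)),
      Measure.prod_apply ((((hE η).preimage measurable_swap).inter hL).diff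
        (((hE θ).preimage measurable_swap).inter hL))]
    refine lintegral_mono_ae (hslice.mono fun v hv => ?_)
    convert hv using 2 <;> ext u <;>
      simp only [E, L, Set.mem_sdiff, mem_inter_iff, mem_preimage, mem_ofPred_eq, Prod.fst_swap,
        Prod.snd_swap, not_and, not_lt] <;>
      exact ⟨fun ⟨⟨hA, hvu⟩, hB⟩ => ⟨hvu, hA, lt_of_not_ge fun h => (hB h).not_gt hvu⟩,
        fun ⟨hvu, hA, hB⟩ => ⟨⟨hA, hvu⟩, fun h => absurd h hB.not_ge⟩⟩
  have hπ := Measure.prod_swap (μ := ν) (ν := ν)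
  rw [measure_eq_lt_add_swap_lt_add_diag hπ (hE θ), measure_eq_lt_add_swap_lt_add_diag hπ (hE η),
    hdiag, measure_add_sdiff_of_subset ((hE η).inter hL) hlow,
    measure_add_sdiff_of_subset (((hE θ).preimage measurable_swap).inter hL) hhigh]
  gcongr ?_ + _
  rw [add_right_comm, add_assoc]
  gcongr

/-- If `F` is a CDF of class `𝓛` (`F 0 = 0` and, for `0 ≤ y ≤ x`,
`z ↦ F(x+yz) + F(x+y/z)` is nonincreasing on `(0,1]`), `X₁, X₂` are i.i.d. with
CDF `F`, and `0 ≤ η ≤ θ ≤ 1/2`, then `θX₁ + (1−θ)X₂ ≥_st ηX₁ + (1−η)X₂`. -/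
theorem classL_two_dim_dominance {Ω : Type*} [MeasurableSpace Ω]
    (μ : Measure Ω) [IsProbabilityMeasure μ]
    (X₁ X₂ : Ω → ℝ) (hX₁ : Measurable X₁) (hX₂ : Measurable X₂)
    (hindep : IndepFun X₁ X₂ μ)
    (ν : Measure ℝ) [IsProbabilityMeasure ν]
    (hlaw₁ : μ.map X₁ = ν) (hlaw₂ : μ.map X₂ = ν)
    (F : ℝ → ℝ) (hF : ∀ x, F x = (ν (Set.Iic x)).toReal)
    (hF0 : F 0 = 0)
    (hL : ∀ x y : ℝ, 0 ≤ y → y ≤ x →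
      AntitoneOn (fun z => F (x + y * z) + F (x + y / z)) (Set.Ioc 0 1))
    (θ η : ℝ) (hη0 : 0 ≤ η) (hηθ : η ≤ θ) (hθ : θ ≤ 1 / 2) :
    ∀ x : ℝ,
      μ {ω | θ * X₁ ω + (1 - θ) * X₂ ω ≤ x}
        ≤ μ {ω | η * X₁ ω + (1 - η) * X₂ ω ≤ x} := by
  intro x
  obtain rfl : F = cdf ν := funext fun x => (hF x).trans (cdf_eq_real ν x).symm
  have hjoint : μ.map (fun ω => (X₁ ω, X₂ ω)) = ν.prod ν := by
    rw [(indepFun_iff_map_prod_eq_prod_map_map hX₁.aemeasurable hX₂.aemeasurable).mp hindep,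
      hlaw₁, hlaw₂]
  have hmix a : μ {ω | a * X₁ ω + (1 - a) * X₂ ω ≤ x}
      = ν.prod ν {p : ℝ × ℝ | a * p.1 + (1 - a) * p.2 ≤ x} := by
    rw [← hjoint, Measure.map_apply (hX₁.prodMk hX₂)
      (measurableSet_le (by fun_prop) measurable_const)]
    rfl
  have hpos : ∀ᵐ v ∂ν, 0 < v := by
    have hIic : ν (Iic 0) = 0 := by rw [← ofReal_cdf, hF0, ENNReal.ofReal_zero]
    simp only [ae_iff, not_lt]
    exact hIic
  rw [hmix, hmix]
  refine measure_prod_mix_le_of_slice_le hηθ (hpos.mono fun v hv => ?_)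
  exact IsClassL.measure_slice_le hL hη0 hηθ hθ hv.le
end

section
/- Let F, G, Fₙ, Gₙ be CDFs on ℝ with ‖Fₙ − F‖_∞ → 0 and ‖Gₙ − G‖_∞ → 0 (sup norm). Then for any θ₁, θ₂ > 0, the weighted convolutions converge uniformly: ‖L_{θ₁,θ₂,Fₙ}(Gₙ) − L_{θ₁,θ₂,F}(G)‖_∞ → 0, where L_{θ₁,θ₂,F}(G)(x) = ∫ G((x − θ₂t)/θ₁) dF(t). -/
/-!
Write `L_{θ₁,θ₂,F}(G)(x) = ∫ G((x − θ₂ t)/θ₁) dF(t)`. Perturbing `G` moves `L` by at most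
`‖Gₙ − G‖_∞`, since `dF` is a probability measure. Perturbing `F` is handled by symmetry:
both `L_{θ₁,θ₂,F}(G)(x)` and `L_{θ₂,θ₁,G}(F)(x)` equal the `dF ⊗ dG`-mass of the half-plane
`{(t, s) | θ₂ t + θ₁ s ≤ x}`, so the measure-perturbation term becomes an integrand-perturbation
term for `dG`, bounded by `‖Fₙ − F‖_∞`.
-/

open MeasureTheory Filter Set ProbabilityTheory

/-- The paper's `L_{θ₁,θ₂,F}(G)` is `weightedConv θ₁ θ₂ dF G`. -/
noncomputable def weightedConv (θ₁ θ₂ : ℝ) (μ : Measure ℝ) (G : ℝ → ℝ) (x : ℝ) : ℝ :=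
  ∫ t, G ((x - θ₂ * t) / θ₁) ∂μ

lemma lintegral_measure_Iic_comm (μ ν : Measure ℝ) [SFinite μ] [SFinite ν] {a b : ℝ}
    (ha : 0 < a) (hb : 0 < b) (x : ℝ) :
    ∫⁻ t, ν (Iic ((x - b * t) / a)) ∂μ = ∫⁻ s, μ (Iic ((x - a * s) / b)) ∂ν := by
  set S : Set (ℝ × ℝ) := {p | b * p.1 + a * p.2 ≤ x}
  have hS : MeasurableSet S := measurableSet_le (by fun_prop) measurable_const
  have slice_left (t : ℝ) : Iic ((x - b * t) / a) = Prod.mk t ⁻¹' S := by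
    ext s
    simp only [mem_Iic, mem_preimage, mem_ofPred_eq, S, le_div_iff₀ ha]
    constructor <;> intro <;> linarith
  have slice_right (s : ℝ) : Iic ((x - a * s) / b) = (fun t => (t, s)) ⁻¹' S := by
    ext t
    simp only [mem_Iic, mem_preimage, mem_ofPred_eq, S, le_div_iff₀ hb]
    constructor <;> intro <;> linarith
  simp only [slice_left, slice_right]
  rw [← Measure.prod_apply hS, Measure.prod_apply_symm hS]

lemma integral_measureReal_Iic_comm (μ ν : Measure ℝ) [IsFiniteMeasure μ] [IsFiniteMeasure ν]
    {a b : ℝ} (ha : 0 < a) (hb : 0 < b) (x : ℝ) :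
    ∫ t, ν.real (Iic ((x - b * t) / a)) ∂μ = ∫ s, μ.real (Iic ((x - a * s) / b)) ∂ν := by
  have measurable_measure_Iic (ρ : Measure ℝ) {m : ℝ → ℝ} (hm : Measurable m) :
      Measurable fun t => ρ (Iic (m t)) :=
    (Monotone.measurable fun _ _ h => measure_mono (Iic_subset_Iic.2 h)).comp hm
  simp only [measureReal_def]
  rw [integral_toReal (measurable_measure_Iic ν (by fun_prop)).aemeasurable
      (ae_of_all _ fun _ => measure_lt_top _ _),
    integral_toReal (measurable_measure_Iic μ (by fun_prop)).aemeasurable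
      (ae_of_all _ fun _ => measure_lt_top _ _),
    lintegral_measure_Iic_comm μ ν ha hb]

namespace StieltjesFunction

variable {f : StieltjesFunction ℝ} (hf0 : Tendsto f atBot (nhds 0))
  (hf1 : Tendsto f atTop (nhds 1))
include hf0 hf1

lemma eq_measureReal_Iic (y : ℝ) : f y = f.measure.real (Iic y) := by
  have := f.isProbabilityMeasure hf0 hf1
  rw [← cdf_eq_real, cdf_measure_stieltjesFunction f hf0 hf1]

lemma integrable_comp {α : Type*} [MeasurableSpace α] {m : α → ℝ} (hm : Measurable m)
    (μ : Measure α) [IsFiniteMeasure μ] : Integrable (fun t => f (m t)) μ := by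
  rw [← cdf_measure_stieltjesFunction f hf0 hf1]
  exact .of_mem_Icc 0 1 ((cdf _).mono.measurable.comp hm).aemeasurable
    (ae_of_all _ fun t => ⟨cdf_nonneg _ _, cdf_le_one _ _⟩)

end StieltjesFunction

lemma abs_integral_sub_integral_le {α : Type*} [MeasurableSpace α] {μ : Measure α}
    [IsProbabilityMeasure μ] {f g : α → ℝ} (hf : Integrable f μ) (hg : Integrable g μ) {ε : ℝ}
    (hfg : ∀ t, |f t - g t| ≤ ε) : |∫ t, f t ∂μ - ∫ t, g t ∂μ| ≤ ε := by
  rw [← integral_sub hf hg]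
  simpa using norm_integral_le_of_norm_le_const (μ := μ)
    (ae_of_all _ fun t => (Real.norm_eq_abs _).trans_le (hfg t))

section weightedConv

variable {θ₁ θ₂ : ℝ} {F G : StieltjesFunction ℝ}
  (hF0 : Tendsto F atBot (nhds 0)) (hF1 : Tendsto F atTop (nhds 1))
  (hG0 : Tendsto G atBot (nhds 0)) (hG1 : Tendsto G atTop (nhds 1))

include hF0 hF1 hG0 hG1

lemma weightedConv_comm (hθ₁ : 0 < θ₁) (hθ₂ : 0 < θ₂) (x : ℝ) :
    weightedConv θ₁ θ₂ F.measure G x = weightedConv θ₂ θ₁ G.measure F x := by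
  have := F.isProbabilityMeasure hF0 hF1
  have := G.isProbabilityMeasure hG0 hG1
  simp only [weightedConv, F.eq_measureReal_Iic hF0 hF1, G.eq_measureReal_Iic hG0 hG1]
  exact integral_measureReal_Iic_comm _ _ hθ₁ hθ₂ x

lemma abs_weightedConv_sub_le (μ : Measure ℝ) [IsProbabilityMeasure μ] {ε : ℝ}
    (hFG : ∀ y, |F y - G y| ≤ ε) (x : ℝ) :
    |weightedConv θ₁ θ₂ μ F x - weightedConv θ₁ θ₂ μ G x| ≤ ε :=
  abs_integral_sub_integral_le (F.integrable_comp hF0 hF1 (by fun_prop) μ)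
    (G.integrable_comp hG0 hG1 (by fun_prop) μ) fun _ => hFG _

end weightedConv

lemma abs_weightedConv_sub_le_of_measure {θ₁ θ₂ : ℝ} (hθ₁ : 0 < θ₁) (hθ₂ : 0 < θ₂)
    {F F' G : StieltjesFunction ℝ}
    (hF0 : Tendsto F atBot (nhds 0)) (hF1 : Tendsto F atTop (nhds 1))
    (hF'0 : Tendsto F' atBot (nhds 0)) (hF'1 : Tendsto F' atTop (nhds 1))
    (hG0 : Tendsto G atBot (nhds 0)) (hG1 : Tendsto G atTop (nhds 1)) {ε : ℝ}
    (hFF' : ∀ y, |F y - F' y| ≤ ε) (x : ℝ) :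
    |weightedConv θ₁ θ₂ F.measure G x - weightedConv θ₁ θ₂ F'.measure G x| ≤ ε := by
  have := G.isProbabilityMeasure hG0 hG1
  rw [weightedConv_comm hF0 hF1 hG0 hG1 hθ₁ hθ₂, weightedConv_comm hF'0 hF'1 hG0 hG1 hθ₁ hθ₂]
  exact abs_weightedConv_sub_le hF0 hF1 hF'0 hF'1 G.measure hFF' x

/-- If CDFs `Fₙ → F` and `Gₙ → G` uniformly, then the weighted convolutions
`L_{θ₁,θ₂,Fₙ}(Gₙ)` converge uniformly to `L_{θ₁,θ₂,F}(G)`, where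
`L_{θ₁,θ₂,F}(G)(x) = ∫ G((x − θ₂ t)/θ₁) dF(t)`. -/
theorem weightedConvolution_uniform_convergence (θ₁ θ₂ : ℝ) (hθ₁ : 0 < θ₁) (hθ₂ : 0 < θ₂)
    (F G : StieltjesFunction ℝ) (Fn Gn : ℕ → StieltjesFunction ℝ)
    (hFbot : Tendsto F atBot (nhds 0)) (hFtop : Tendsto F atTop (nhds 1))
    (hGbot : Tendsto G atBot (nhds 0)) (hGtop : Tendsto G atTop (nhds 1))
    (hFnbot : ∀ n, Tendsto (Fn n) atBot (nhds 0)) (hFntop : ∀ n, Tendsto (Fn n) atTop (nhds 1))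
    (hGnbot : ∀ n, Tendsto (Gn n) atBot (nhds 0)) (hGntop : ∀ n, Tendsto (Gn n) atTop (nhds 1))
    (hFconv : ∀ ε > (0 : ℝ), ∃ N, ∀ n ≥ N, ∀ x : ℝ, |Fn n x - F x| ≤ ε)
    (hGconv : ∀ ε > (0 : ℝ), ∃ N, ∀ n ≥ N, ∀ x : ℝ, |Gn n x - G x| ≤ ε) :
    ∀ ε > (0 : ℝ), ∃ N, ∀ n ≥ N, ∀ x : ℝ,
      |(∫ t, Gn n ((x - θ₂ * t) / θ₁) ∂(Fn n).measure)
        - ∫ t, G ((x - θ₂ * t) / θ₁) ∂F.measure| ≤ ε := by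
  intro ε hε
  obtain ⟨NF, hNF⟩ := hFconv (ε / 2) (by positivity)
  obtain ⟨NG, hNG⟩ := hGconv (ε / 2) (by positivity)
  refine ⟨max NF NG, fun n hn x => ?_⟩
  have := (Fn n).isProbabilityMeasure (hFnbot n) (hFntop n)
  have integrand_step := abs_weightedConv_sub_le (θ₁ := θ₁) (θ₂ := θ₂) (hGnbot n) (hGntop n)
    hGbot hGtop (Fn n).measure (hNG n (le_of_max_le_right hn)) x
  have measure_step := abs_weightedConv_sub_le_of_measure hθ₁ hθ₂ (hFnbot n) (hFntop n)
    hFbot hFtop hGbot hGtop (hNF n (le_of_max_le_left hn)) x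
  calc |weightedConv θ₁ θ₂ (Fn n).measure (Gn n) x - weightedConv θ₁ θ₂ F.measure G x|
      ≤ |weightedConv θ₁ θ₂ (Fn n).measure (Gn n) x - weightedConv θ₁ θ₂ (Fn n).measure G x|
        + |weightedConv θ₁ θ₂ (Fn n).measure G x - weightedConv θ₁ θ₂ F.measure G x| :=
        abs_sub_le _ _ _
    _ ≤ ε := by linarith
end

section
/- Let F be a continuous CDF and θ₁, θ₂ > 0. Let 𝔽ₙ be the empirical CDF of an i.i.d. sample of size n from F, and define 𝔽_{n,θ}(x) = ∫ 𝔽ₙ((x − θ₂t)/θ₁) d𝔽ₙ(t) and F_θ(x) = ∫ F((x − θ₂t)/θ₁) dF(t). Then ‖𝔽_{n,θ} − F_θ‖_∞ ≤ 2·‖𝔽ₙ − F‖_∞, and hence ‖𝔽_{n,θ} − F_θ‖_∞ → 0 almost surely as n → ∞. -/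
/-!
With `g t = (x - θ₂ t) / θ₁` and `h s = (x - θ₁ s) / θ₂` one has `s ≤ g t ↔ t ≤ h s`. This swaps the
double sum defining `𝔽_{n,θ}(x)`, and the sample sum against `ν` in `∫ 𝔽ₙ(g t) dν(t)`, giving
`𝔽_{n,θ}(x) - F_θ(x) = (1/n) Σᵢ (𝔽ₙ - F)(h Xᵢ) + ∫ (𝔽ₙ - F)(g t) dν(t)`,
and each term is at most `‖𝔽ₙ - F‖_∞`.

For continuous `F` the Glivenko–Cantelli theorem follows from the strong law at the countably many
quantiles `F⁻¹(j / (k + 1))`: as `𝔽ₙ` and `F` are monotone, convergence on the `k`-th quantile grid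
bounds `‖𝔽ₙ - F‖_∞` by `1 / (k + 1)` in the limit.
-/

open MeasureTheory ProbabilityTheory Filter Topology

noncomputable def empiricalCDF (x : ℕ → ℝ) (n : ℕ) (t : ℝ) : ℝ :=
  (1 / (n : ℝ)) * ∑ i ∈ Finset.range n, if x i ≤ t then (1 : ℝ) else 0

section EmpiricalCDF

variable (x : ℕ → ℝ) (n : ℕ)

lemma empiricalCDF_eq_card_div (t : ℝ) :
    empiricalCDF x n t = ((Finset.range n).filter (x · ≤ t)).card / n := by
  rw [empiricalCDF, Finset.sum_boole, one_div_mul_eq_div]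

lemma empiricalCDF_nonneg (t : ℝ) : 0 ≤ empiricalCDF x n t := by
  rw [empiricalCDF_eq_card_div]; positivity

lemma empiricalCDF_le_one (t : ℝ) : empiricalCDF x n t ≤ 1 := by
  rw [empiricalCDF_eq_card_div]
  refine div_le_one_of_le₀ ?_ n.cast_nonneg
  exact_mod_cast (Finset.card_filter_le _ _).trans (Finset.card_range n).le

lemma monotone_empiricalCDF : Monotone (empiricalCDF x n) := fun s t hst => by
  simp only [empiricalCDF_eq_card_div]
  gcongr with i

lemma sum_empiricalCDF_comp_comm {g h : ℝ → ℝ} (hgh : ∀ s t, s ≤ g t ↔ t ≤ h s) :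
    ∑ j ∈ Finset.range n, empiricalCDF x n (g (x j))
      = ∑ i ∈ Finset.range n, empiricalCDF x n (h (x i)) := by
  simp only [empiricalCDF, ← Finset.mul_sum, hgh]
  rw [Finset.sum_comm]

lemma integral_empiricalCDF_comp (ν : Measure ℝ) [IsProbabilityMeasure ν] {g h : ℝ → ℝ}
    (hgh : ∀ s t, s ≤ g t ↔ t ≤ h s) :
    ∫ t, empiricalCDF x n (g t) ∂ν = (1 / (n : ℝ)) * ∑ i ∈ Finset.range n, cdf ν (h (x i)) := by
  have hind : ∀ t, empiricalCDF x n (g t)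
      = (1 / (n : ℝ)) * ∑ i ∈ Finset.range n, (Set.Iic (h (x i))).indicator 1 t := fun t => by
    simp only [empiricalCDF, hgh, Set.indicator_apply, Set.mem_Iic, Pi.one_apply]
  simp_rw [hind, integral_const_mul, cdf_eq_real]
  rw [integral_finsetSum _ fun i _ => (integrable_const 1).indicator measurableSet_Iic]
  simp_rw [integral_indicator_one measurableSet_Iic]

end EmpiricalCDF

lemma abs_average_le {f : ℕ → ℝ} {D : ℝ} (hf : ∀ i, |f i| ≤ D) (n : ℕ) :
    |(1 / (n : ℝ)) * ∑ i ∈ Finset.range n, f i| ≤ D := by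
  have hD : 0 ≤ D := (abs_nonneg _).trans (hf 0)
  calc |(1 / (n : ℝ)) * ∑ i ∈ Finset.range n, f i|
      ≤ (1 / (n : ℝ)) * ∑ i ∈ Finset.range n, |f i| := by
        rw [abs_mul, abs_of_nonneg (by positivity)]
        gcongr
        exact Finset.abs_sum_le_sum_abs _ _
    _ ≤ (1 / (n : ℝ)) * (n * D) := by
        gcongr
        exact (Finset.sum_le_sum fun i _ => hf i).trans_eq (by simp)
    _ ≤ D := by
        rw [← mul_assoc, one_div_mul_eq_div]
        exact mul_le_of_le_one_left hD (div_self_le_one _)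

theorem abs_average_empiricalCDF_comp_sub_integral_le (ν : Measure ℝ) [IsProbabilityMeasure ν]
    (x : ℕ → ℝ) (n : ℕ) {g h : ℝ → ℝ} (hgh : ∀ s t, s ≤ g t ↔ t ≤ h s) :
    |(1 / (n : ℝ)) * ∑ j ∈ Finset.range n, empiricalCDF x n (g (x j)) - ∫ t, cdf ν (g t) ∂ν|
      ≤ 2 * ⨆ y, |empiricalCDF x n y - cdf ν y| := by
  set D := ⨆ y, |empiricalCDF x n y - cdf ν y|
  have hD : ∀ y, |empiricalCDF x n y - cdf ν y| ≤ D := le_ciSup ⟨1, by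
    rintro _ ⟨y, rfl⟩
    exact abs_sub_le_of_nonneg_of_le (empiricalCDF_nonneg x n y) (empiricalCDF_le_one x n y)
      (cdf_nonneg ν y) (cdf_le_one ν y)⟩
  have hg : Antitone g := fun t t' htt' => (hgh _ _).2 (htt'.trans ((hgh _ _).1 le_rfl))
  have hint : ∀ G : ℝ → ℝ, Monotone G → (∀ y, G y ∈ Set.Icc 0 1) →
      Integrable (fun t => G (g t)) ν := fun G hG hG01 =>
    Integrable.of_bound (hG.comp_antitone hg).measurable.aestronglyMeasurable 1
      (ae_of_all _ fun t => abs_le.2 ⟨by linarith [(hG01 (g t)).1], (hG01 (g t)).2⟩)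
  have hsplit : (1 / (n : ℝ)) * ∑ j ∈ Finset.range n, empiricalCDF x n (g (x j))
        - ∫ t, cdf ν (g t) ∂ν
      = (1 / (n : ℝ)) * ∑ i ∈ Finset.range n,
          (empiricalCDF x n (h (x i)) - cdf ν (h (x i)))
        + ∫ t, (empiricalCDF x n (g t) - cdf ν (g t)) ∂ν := by
    rw [sum_empiricalCDF_comp_comm x n hgh,
      integral_sub (hint _ (monotone_empiricalCDF x n) fun y =>
        ⟨empiricalCDF_nonneg x n y, empiricalCDF_le_one x n y⟩)
        (hint _ (cdf ν).mono fun y => ⟨cdf_nonneg ν y, cdf_le_one ν y⟩),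
      integral_empiricalCDF_comp x n ν hgh, Finset.sum_sub_distrib]
    ring
  rw [hsplit, two_mul]
  refine (abs_add_le _ _).trans (add_le_add (abs_average_le (fun i => hD _) n) ?_)
  simpa using norm_integral_le_of_norm_le_const (μ := ν)
    (f := fun t => empiricalCDF x n (g t) - cdf ν (g t)) (ae_of_all _ fun t => hD (g t))

lemma le_sub_mul_div_iff_le_sub_mul_div {a b : ℝ} (ha : 0 < a) (hb : 0 < b) (x s t : ℝ) :
    s ≤ (x - b * t) / a ↔ t ≤ (x - a * s) / b := by
  rw [le_div_iff₀ ha, le_div_iff₀ hb]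
  constructor <;> intro <;> linarith

theorem ae_tendsto_average_indicator {Ω α : Type*} [MeasurableSpace Ω] [MeasurableSpace α]
    {μ : Measure Ω} {X : ℕ → Ω → α} (hmeas : ∀ i, Measurable (X i)) (hindep : iIndepFun X μ)
    {ν : Measure α} [IsFiniteMeasure ν] (hlaw : ∀ i, μ.map (X i) = ν)
    {s : Set α} (hs : MeasurableSet s) :
    ∀ᵐ ω ∂μ, Tendsto (fun n : ℕ => (∑ i ∈ Finset.range n, s.indicator (1 : α → ℝ) (X i ω)) / n)
      atTop (𝓝 (ν.real s)) := by
  have hf : Measurable (s.indicator (1 : α → ℝ)) := measurable_one.indicator hs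
  have hident : ∀ i, IdentDistrib (X i) (X 0) μ μ := fun i =>
    ⟨(hmeas i).aemeasurable, (hmeas 0).aemeasurable, by rw [hlaw, hlaw]⟩
  have hint : Integrable (s.indicator 1 ∘ X 0) μ :=
    (integrable_map_measure hf.aestronglyMeasurable (hmeas 0).aemeasurable).1
      (by rw [hlaw]; exact (integrable_const 1).indicator hs)
  have hmean : μ[s.indicator 1 ∘ X 0] = ν.real s := by
    rw [Function.comp_def, ← integral_map (hmeas 0).aemeasurable hf.aestronglyMeasurable, hlaw,
      integral_indicator_one hs]
  have hslln := strong_law_ae_real (fun i => s.indicator 1 ∘ X i) hint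
    (fun i j hij => (hindep.comp _ fun _ => hf).indepFun hij) (fun i => (hident i).comp hf)
  rwa [hmean] at hslln

theorem ae_tendsto_empiricalCDF {Ω : Type*} [MeasurableSpace Ω] {μ : Measure Ω}
    {X : ℕ → Ω → ℝ} (hmeas : ∀ i, Measurable (X i)) (hindep : iIndepFun X μ)
    {ν : Measure ℝ} [IsProbabilityMeasure ν] (hlaw : ∀ i, μ.map (X i) = ν) (t : ℝ) :
    ∀ᵐ ω ∂μ, Tendsto (fun n => empiricalCDF (X · ω) n t) atTop (𝓝 (cdf ν t)) := by
  filter_upwards [ae_tendsto_average_indicator hmeas hindep hlaw (measurableSet_Iic (a := t))]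
    with ω hω
  simpa only [empiricalCDF, one_div_mul_eq_div, cdf_eq_real, Set.indicator_apply, Set.mem_Iic,
    Pi.one_apply] using hω

lemma exists_div_mem_Ioc_or_one_sub_le {v : ℝ} (hv : 0 ≤ v) (k : ℕ) :
    (∃ j ∈ Set.Ioo (0 : ℤ) (k + 1), (j : ℝ) / (k + 1) ∈ Set.Ioc v (v + 1 / (k + 1))) ∨
      1 - 1 / (k + 1) ≤ v := by
  have hm : (0 : ℝ) < k + 1 := by positivity
  set u := (k + 1 : ℝ) * v
  have hv_eq : v = u / (k + 1) := by rw [mul_div_cancel_left₀ _ hm.ne']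
  by_cases hj : ⌊u⌋ + 1 < k + 1
  · refine Or.inl ⟨⌊u⌋ + 1, ⟨by linarith [Int.floor_nonneg.2 (by positivity : 0 ≤ u)], hj⟩,
      ?_, ?_⟩
    · rw [hv_eq]
      gcongr
      push_cast
      exact Int.lt_floor_add_one u
    · rw [hv_eq, ← add_div]
      gcongr
      push_cast
      linarith [Int.floor_le u]
  · have hku : (k : ℝ) ≤ u := by
      have : (k : ℤ) ≤ ⌊u⌋ := by omega
      exact (Int.cast_le.2 this).trans (Int.floor_le u)
    refine Or.inr ?_
    rw [hv_eq, one_sub_div hm.ne', div_le_div_iff_of_pos_right hm]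
    linarith

lemma exists_div_mem_Ico_or_le_one_div {v : ℝ} (hv : v ≤ 1) (k : ℕ) :
    (∃ j ∈ Set.Ioo (0 : ℤ) (k + 1), (j : ℝ) / (k + 1) ∈ Set.Ico (v - 1 / (k + 1)) v) ∨
      v ≤ 1 / (k + 1) := by
  have hm : (0 : ℝ) < k + 1 := by positivity
  set u := (k + 1 : ℝ) * v
  have hv_eq : v = u / (k + 1) := by rw [mul_div_cancel_left₀ _ hm.ne']
  by_cases hj : 0 < ⌈u⌉ - 1
  · have hceil : ⌈u⌉ ≤ k + 1 := Int.ceil_le.2 (by push_cast; nlinarith)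
    refine Or.inl ⟨⌈u⌉ - 1, ⟨hj, by omega⟩, ?_, ?_⟩
    · rw [hv_eq, ← sub_div]
      gcongr
      push_cast
      linarith [Int.le_ceil u]
    · rw [hv_eq]
      gcongr
      push_cast
      linarith [Int.ceil_lt_add_one u]
  · have hu : u ≤ 1 := by
      have : ⌈u⌉ ≤ 1 := by omega
      exact_mod_cast Int.ceil_le.1 this
    refine Or.inr ?_
    rw [hv_eq]
    gcongr

def IsBracketingGrid (F : ℝ → ℝ) (ε : ℝ) (P : Finset ℝ) : Prop :=
  ∀ y, ((∃ q ∈ P, y ≤ q ∧ F q ≤ F y + ε) ∨ 1 - ε ≤ F y) ∧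
    ((∃ q ∈ P, q ≤ y ∧ F y - ε ≤ F q) ∨ F y ≤ ε)

lemma IsBracketingGrid.abs_sub_le {F G : ℝ → ℝ} {ε δ : ℝ} {P : Finset ℝ}
    (hP : IsBracketingGrid F ε P) (hG : Monotone G) (hG01 : ∀ y, G y ∈ Set.Icc 0 1)
    (hδ : 0 ≤ δ) (hPδ : ∀ q ∈ P, |G q - F q| ≤ δ) (y : ℝ) : |G y - F y| ≤ ε + δ := by
  obtain ⟨hup, hlow⟩ := hP y
  rw [abs_sub_le_iff]
  constructor
  · rcases hup with ⟨q, hq, hyq, hFq⟩ | hFy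
    · linarith [hG hyq, (abs_sub_le_iff.1 (hPδ q hq)).1]
    · linarith [(hG01 y).2]
  · rcases hlow with ⟨q, hq, hqy, hFq⟩ | hFy
    · linarith [hG hqy, (abs_sub_le_iff.1 (hPδ q hq)).2]
    · linarith [(hG01 y).1]

lemma Ioo_subset_range_cdf {ν : Measure ℝ} [IsProbabilityMeasure ν] (hcont : Continuous (cdf ν)) :
    Set.Ioo 0 1 ⊆ Set.range (cdf ν) := fun _ hr =>
  mem_range_of_exists_le_of_exists_ge hcont
    (((tendsto_cdf_atBot ν).eventually (ge_mem_nhds hr.1)).exists)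
    (((tendsto_cdf_atTop ν).eventually (le_mem_nhds hr.2)).exists)

theorem exists_isBracketingGrid_cdf {ν : Measure ℝ} [IsProbabilityMeasure ν]
    (hcont : Continuous (cdf ν)) (k : ℕ) : ∃ P, IsBracketingGrid (cdf ν) (1 / (k + 1)) P := by
  have hquantile : ∀ j ∈ Set.Ioo (0 : ℤ) (k + 1), ∃ q, cdf ν q = j / (k + 1) := fun j hj =>
    Ioo_subset_range_cdf hcont ⟨by have := hj.1; positivity, by
      rw [div_lt_one (by positivity)]; exact_mod_cast hj.2⟩
  choose! q hq using hquantile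
  refine ⟨(Finset.Ioo 0 (k + 1 : ℤ)).image q, fun y => ⟨?_, ?_⟩⟩
  · rcases exists_div_mem_Ioc_or_one_sub_le (cdf_nonneg ν y) k with ⟨j, hj, hjy⟩ | hy
    · rw [← hq j hj] at hjy
      exact Or.inl ⟨q j, Finset.mem_image_of_mem _ (Finset.mem_Ioo.2 hj),
        ((cdf ν).mono.reflect_lt hjy.1).le, hjy.2⟩
    · exact Or.inr hy
  · rcases exists_div_mem_Ico_or_le_one_div (cdf_le_one ν y) k with ⟨j, hj, hjy⟩ | hy
    · rw [← hq j hj] at hjy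
      exact Or.inl ⟨q j, Finset.mem_image_of_mem _ (Finset.mem_Ioo.2 hj),
        ((cdf ν).mono.reflect_lt hjy.2).le, hjy.1⟩
    · exact Or.inr hy

theorem tendsto_iSup_abs_sub_of_isBracketingGrid {F : ℝ → ℝ} {G : ℕ → ℝ → ℝ}
    (hG : ∀ n, Monotone (G n)) (hG01 : ∀ n y, G n y ∈ Set.Icc 0 1) {P : ℕ → Finset ℝ}
    (hP : ∀ k : ℕ, IsBracketingGrid F (1 / (k + 1)) (P k))
    (hconv : ∀ k, ∀ q ∈ P k, Tendsto (G · q) atTop (𝓝 (F q))) :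
    Tendsto (fun n => ⨆ y, |G n y - F y|) atTop (𝓝 0) := by
  refine tendsto_order.2 ⟨fun a ha => Eventually.of_forall fun n =>
    ha.trans_le (Real.iSup_nonneg fun _ => abs_nonneg _), fun ε hε => ?_⟩
  obtain ⟨k, hk⟩ := exists_nat_one_div_lt (half_pos hε)
  have hnear : ∀ᶠ n in atTop, ∀ q ∈ P k, |G n q - F q| ≤ ε / 2 :=
    (eventually_all_finset _).2 fun q hq =>
      (Metric.tendsto_nhds.1 (hconv k q hq) _ (half_pos hε)).mono fun n hn => hn.le
  filter_upwards [hnear] with n hn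
  calc ⨆ y, |G n y - F y| ≤ 1 / (k + 1) + ε / 2 :=
        Real.iSup_le ((hP k).abs_sub_le (hG n) (hG01 n) (half_pos hε).le hn) (by positivity)
    _ < ε := by linarith

theorem ae_tendsto_iSup_abs_empiricalCDF_sub_cdf {Ω : Type*} [MeasurableSpace Ω]
    {μ : Measure Ω} {X : ℕ → Ω → ℝ} (hmeas : ∀ i, Measurable (X i)) (hindep : iIndepFun X μ)
    {ν : Measure ℝ} [IsProbabilityMeasure ν] (hlaw : ∀ i, μ.map (X i) = ν)
    (hcont : Continuous (cdf ν)) :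
    ∀ᵐ ω ∂μ, Tendsto (fun n => ⨆ y, |empiricalCDF (X · ω) n y - cdf ν y|) atTop (𝓝 0) := by
  choose P hP using exists_isBracketingGrid_cdf hcont
  have hconv : ∀ᵐ ω ∂μ, ∀ k, ∀ q ∈ P k,
      Tendsto (fun n => empiricalCDF (X · ω) n q) atTop (𝓝 (cdf ν q)) :=
    ae_all_iff.2 fun k => (eventually_all_finset _).2 fun q _ =>
      ae_tendsto_empiricalCDF hmeas hindep hlaw q
  filter_upwards [hconv] with ω hω
  exact tendsto_iSup_abs_sub_of_isBracketingGrid (fun n => monotone_empiricalCDF _ n)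
    (fun n y => ⟨empiricalCDF_nonneg _ n y, empiricalCDF_le_one _ n y⟩) hP hω

theorem plugin_uniform_convergence_general {Ω : Type*} [MeasurableSpace Ω]
    (μ : Measure Ω)
    (X : ℕ → Ω → ℝ) (hmeas : ∀ i, Measurable (X i))
    (hindep : iIndepFun X μ)
    (ν : Measure ℝ) [IsProbabilityMeasure ν] (hlaw : ∀ i, μ.map (X i) = ν)
    (F : ℝ → ℝ) (hF : ∀ x, F x = (ν (Set.Iic x)).toReal) (hFcont : Continuous F)
    (θ₁ θ₂ : ℝ) (hθ₁ : 0 < θ₁) (hθ₂ : 0 < θ₂)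
    (Fn : ℕ → Ω → ℝ → ℝ)
    (hFn : ∀ n ω x, Fn n ω x
      = (1 / (n : ℝ)) * ∑ i ∈ Finset.range n, (if X i ω ≤ x then (1 : ℝ) else 0))
    (Fnθ : ℕ → Ω → ℝ → ℝ)
    (hFnθ : ∀ n ω x, Fnθ n ω x
      = (1 / (n : ℝ)) * ∑ j ∈ Finset.range n, Fn n ω ((x - θ₂ * X j ω) / θ₁))
    (Fθ : ℝ → ℝ) (hFθ : ∀ x, Fθ x = ∫ t, F ((x - θ₂ * t) / θ₁) ∂ν) :
    (∀ n, 0 < n → ∀ ω x, |Fnθ n ω x - Fθ x| ≤ 2 * ⨆ y : ℝ, |Fn n ω y - F y|)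
    ∧ (∀ᵐ ω ∂μ, Tendsto (fun n => ⨆ x : ℝ, |Fnθ n ω x - Fθ x|) atTop (nhds 0)) := by
  obtain rfl : F = cdf ν := funext fun x => by rw [hF, cdf_eq_real, measureReal_def]
  obtain rfl : Fn = fun n ω => empiricalCDF (X · ω) n := funext fun n => funext fun ω =>
    funext (hFn n ω)
  have hbound : ∀ n ω x, |Fnθ n ω x - Fθ x| ≤ 2 * ⨆ y, |empiricalCDF (X · ω) n y - cdf ν y| :=
    fun n ω x => by
      rw [hFnθ, hFθ]
      exact abs_average_empiricalCDF_comp_sub_integral_le ν (X · ω) n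
        (g := fun t => (x - θ₂ * t) / θ₁) (le_sub_mul_div_iff_le_sub_mul_div hθ₁ hθ₂ x)
  refine ⟨fun n _ => hbound n, ?_⟩
  filter_upwards [ae_tendsto_iSup_abs_empiricalCDF_sub_cdf hmeas hindep hlaw hFcont] with ω hω
  refine squeeze_zero (fun n => Real.iSup_nonneg fun x => abs_nonneg _)
    (fun n => Real.iSup_le (hbound n ω)
      (mul_nonneg zero_le_two (Real.iSup_nonneg fun y => abs_nonneg _))) ?_
  simpa using hω.const_mul 2

/-- For i.i.d. `X₁, X₂, … ~ F` (continuous CDF, law `ν`) and `θ₁, θ₂ > 0`, with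
`𝔽ₙ` the empirical CDF, `𝔽_{n,θ}(x) = ∫ 𝔽ₙ((x−θ₂t)/θ₁) d𝔽ₙ(t)` and
`F_θ(x) = ∫ F((x−θ₂t)/θ₁) dF(t)`, one has the deterministic bound
`‖𝔽_{n,θ} − F_θ‖_∞ ≤ 2‖𝔽ₙ − F‖_∞`, and hence `‖𝔽_{n,θ} − F_θ‖_∞ → 0` a.s. -/
theorem plugin_uniform_convergence {Ω : Type*} [MeasurableSpace Ω]
    (μ : Measure Ω) [IsProbabilityMeasure μ]
    (X : ℕ → Ω → ℝ) (hmeas : ∀ i, Measurable (X i))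
    (hindep : iIndepFun X μ)
    (ν : Measure ℝ) [IsProbabilityMeasure ν] (hlaw : ∀ i, μ.map (X i) = ν)
    (F : ℝ → ℝ) (hF : ∀ x, F x = (ν (Set.Iic x)).toReal) (hFcont : Continuous F)
    (θ₁ θ₂ : ℝ) (hθ₁ : 0 < θ₁) (hθ₂ : 0 < θ₂)
    (Fn : ℕ → Ω → ℝ → ℝ)
    (hFn : ∀ n ω x, Fn n ω x
      = (1 / (n : ℝ)) * ∑ i ∈ Finset.range n, (if X i ω ≤ x then (1 : ℝ) else 0))
    (Fnθ : ℕ → Ω → ℝ → ℝ)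
    (hFnθ : ∀ n ω x, Fnθ n ω x
      = (1 / (n : ℝ)) * ∑ j ∈ Finset.range n, Fn n ω ((x - θ₂ * X j ω) / θ₁))
    (Fθ : ℝ → ℝ) (hFθ : ∀ x, Fθ x = ∫ t, F ((x - θ₂ * t) / θ₁) ∂ν) :
    (∀ n, 0 < n → ∀ ω x, |Fnθ n ω x - Fθ x| ≤ 2 * ⨆ y : ℝ, |Fn n ω y - F y|)
    ∧ (∀ᵐ ω ∂μ, Tendsto (fun n => ⨆ x : ℝ, |Fnθ n ω x - Fθ x|) atTop (nhds 0)) :=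
  plugin_uniform_convergence_general μ X hmeas hindep ν hlaw F hF hFcont θ₁ θ₂ hθ₁ hθ₂ Fn hFn Fnθ
    hFnθ Fθ hFθ
end
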